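/- arXiv:math/9907076 — 4 statements merged into one kernel-verified Lean document; each statement's English description precedes it below -/
import Mathlib

section
/- For a graph G on vertices v_1,...,v_d with edge e = v_{d-1}v_d, the noncommutative chromatic symmetric function satisfies the deletion-contraction law Y_G = Y_{G∖e} − (Y_{G/e})↑, where contraction labels the merged vertex v_{d-1} and ↑ is the linear operation sending x_{i_1}···x_{i_{d-1}} to x_{i_1}···x_{i_{d-2}} x_{i_{d-1}}². -/
open Finset

attribute [local instance] Classical.propDecidable

/-- Homogeneous degree-`d` noncommutative symmetric functions, viewed as
coefficient functions on words of length `d` in the variables. -/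
abbrev NCF (d : ℕ) := (Fin d → ℕ) → ℚ

/-- A coloring is proper for the edge family `ends` if the endpoints of every
edge receive distinct colors. -/
def Proper {d : ℕ} {ε : Type*} {C : Type*} (ends : ε → Sym2 (Fin d)) (w : Fin d → C) : Prop :=
  ∀ (e : ε) (i j : Fin d), ends e = s(i, j) → w i ≠ w j

/-- The noncommutative chromatic symmetric function `Y_G`. -/
noncomputable def Y {d : ℕ} {ε : Type*} (ends : ε → Sym2 (Fin d)) : NCF d :=
  fun w => if Proper ends w then 1 else 0

/-- Noncommutative monomial symmetric function indexed by a set partition. -/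
noncomputable def mFun {d : ℕ} (π : Setoid (Fin d)) : NCF d :=
  fun w => if (∀ i j, w i = w j ↔ π i j) then 1 else 0

/-- Noncommutative power sum symmetric function indexed by a set partition. -/
noncomputable def pFun {d : ℕ} (π : Setoid (Fin d)) : NCF d :=
  fun w => if (∀ i j, π i j → w i = w j) then 1 else 0

/-- Noncommutative elementary symmetric function indexed by a set partition. -/
noncomputable def eFun {d : ℕ} (π : Setoid (Fin d)) : NCF d :=
  fun w => if (∀ i j, i ≠ j → π i j → w i ≠ w j) then 1 else 0

noncomputable instance setoidFintype (d : ℕ) : Fintype (Setoid (Fin d)) :=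
  Fintype.ofInjective (fun s : Setoid (Fin d) => (s : Fin d → Fin d → Prop))
    (fun s t h => Setoid.ext fun a b => by
      have := congrFun (congrFun h a) b; simpa using this.to_iff)

/-- Position action of a permutation on words/NCFs. -/
noncomputable def act {d : ℕ} (δ : Equiv.Perm (Fin d)) (f : NCF d) : NCF d :=
  fun w => f (w ∘ δ)

/-- The induction operator `↑`, repeating the last variable. -/
noncomputable def up {n : ℕ} (f : NCF (n + 1)) : NCF (n + 2) :=
  fun w => if w (Fin.last (n + 1)) = w ⟨n, by omega⟩ then f (fun i => w i.castSucc) else 0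

/-- Vertex map collapsing the last vertex onto the next-to-last one (for contraction). -/
def collapse {n : ℕ} : Fin (n + 2) → Fin (n + 1) :=
  fun i => if h : (i : ℕ) < n + 1 then ⟨i, h⟩ else ⟨n, by omega⟩

/-- The partition of `[d]` into connected components of the spanning subgraph with edge set `S`. -/
def components {d : ℕ} {ε : Type*} (ends : ε → Sym2 (Fin d)) (S : Finset ε) :
    Setoid (Fin d) :=
  Relation.EqvGen.setoid (fun i j => ∃ e ∈ S, ends e = s(i, j))

/-- The size of the block of `π` containing `i`. -/
noncomputable def blockCard {n : ℕ} (π : Setoid (Fin n)) (i : Fin n) : ℕ :=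
  (Finset.univ.filter (fun j => π i j)).card

/-- The multiset of block sizes (the type `λ(π)`) of a set partition. -/
noncomputable def sizes {n : ℕ} (π : Setoid (Fin n)) : Multiset ℕ :=
  (Finset.univ.image (fun i => Finset.univ.filter (fun j => π i j))).val.map Finset.card

/-- `σ ≡ᵢ τ` : same type and blocks containing `i` of equal size. -/
def cls {n : ℕ} (i : Fin n) (σ τ : Setoid (Fin n)) : Prop :=
  sizes σ = sizes τ ∧ blockCard σ i = blockCard τ i

/-- Congruence modulo `i` of noncommutative symmetric functions: the amalgamated
coefficients of their `e`-expansions agree on every `≡ᵢ`-class. -/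
noncomputable def EquivI {n : ℕ} (i : Fin n) (F G : NCF n) : Prop :=
  ∃ a b : Setoid (Fin n) → ℚ,
    F = ∑ τ : Setoid (Fin n), a τ • eFun τ ∧
    G = ∑ τ : Setoid (Fin n), b τ • eFun τ ∧
    ∀ τ, (∑ σ : Setoid (Fin n), if cls i σ τ then a σ else 0)
        = ∑ σ : Setoid (Fin n), if cls i σ τ then b σ else 0

/-- `(e)`-positivity with respect to the congruence modulo `i`. -/
noncomputable def EPos {n : ℕ} (i : Fin n) (F : NCF n) : Prop :=
  ∃ a : Setoid (Fin n) → ℚ,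
    F = ∑ τ : Setoid (Fin n), a τ • eFun τ ∧
    ∀ τ, 0 ≤ ∑ σ : Setoid (Fin n), if cls i σ τ then a σ else 0

/-- `(e)`-positivity of a labeled graph: for some labeling and some congruence. -/
noncomputable def EPosG {d : ℕ} {ε : Type*} (ends : ε → Sym2 (Fin d)) : Prop :=
  ∃ (δ : Equiv.Perm (Fin d)) (i : Fin d),
    EPos i (Y (fun e => (ends e).map δ))

/-- Extend a partition of `{0,…,n}` to one of `{0,…,n+m}`: old blocks are kept,
the new elements (indices `≥ n+1`) satisfying `Q` are merged into the block of
the old last element `n`, and the remaining new elements form singletons. -/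
def extendB {n : ℕ} (m : ℕ) (π : Setoid (Fin (n + 1))) (Q : ℕ → Prop) :
    Setoid (Fin (n + 1 + m)) where
  r x y := x = y ∨
    (∃ (hx : (x : ℕ) < n + 1) (hy : (y : ℕ) < n + 1), π ⟨x, hx⟩ ⟨y, hy⟩) ∨
    (((∃ hx : (x : ℕ) < n + 1, π ⟨x, hx⟩ (Fin.last n)) ∨ (n + 1 ≤ (x : ℕ) ∧ Q (x : ℕ))) ∧
     ((∃ hy : (y : ℕ) < n + 1, π ⟨y, hy⟩ (Fin.last n)) ∨ (n + 1 ≤ (y : ℕ) ∧ Q (y : ℕ))))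
  iseqv := by
    constructor
    · intro x; exact Or.inl rfl
    · rintro x y (rfl | ⟨hx, hy, h⟩ | ⟨h1, h2⟩)
      · exact Or.inl rfl
      · exact Or.inr (Or.inl ⟨hy, hx, π.symm h⟩)
      · exact Or.inr (Or.inr ⟨h2, h1⟩)
    · rintro x y z (rfl | ⟨hx, hy, h⟩ | ⟨h1, h2⟩) h'
      · exact h'
      · rcases h' with rfl | ⟨hy', hz, h''⟩ | ⟨h1', h2'⟩
        · exact Or.inr (Or.inl ⟨hx, hy, h⟩)
        · exact Or.inr (Or.inl ⟨hx, hz, π.trans h h''⟩)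
        · rcases h1' with ⟨hy', hB⟩ | ⟨hge, _⟩
          · exact Or.inr (Or.inr ⟨Or.inl ⟨hx, π.trans h hB⟩, h2'⟩)
          · omega
      · rcases h' with rfl | ⟨hy', hz, h''⟩ | ⟨h1', h2'⟩
        · exact Or.inr (Or.inr ⟨h1, h2⟩)
        · rcases h2 with ⟨hy2, hB⟩ | ⟨hge, _⟩
          · exact Or.inr (Or.inr ⟨h1, Or.inl ⟨hz, π.trans (π.trans (π.symm h'') hB) (π.refl _)⟩⟩)
          · omega
        · exact Or.inr (Or.inr ⟨h1, h2'⟩)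

/-- `π + (n+1)` : insert the new element `n+1` into the block containing `n`. -/
def addLast {n : ℕ} (π : Setoid (Fin (n + 1))) : Setoid (Fin (n + 2)) :=
  extendB 1 π (fun _ => True)

/-- `π / (n+1)` : add the new element `n+1` as a singleton block. -/
def addSingleton {n : ℕ} (π : Setoid (Fin (n + 1))) : Setoid (Fin (n + 2)) :=
  extendB 1 π (fun _ => False)

/-- `σ / (d+1),…,(d+m)` : add the new elements as one additional block. -/
def addBlock {d : ℕ} (m : ℕ) (σ : Setoid (Fin d)) : Setoid (Fin (d + m)) where
  r x y := (∃ (hx : (x : ℕ) < d) (hy : (y : ℕ) < d), σ ⟨x, hx⟩ ⟨y, hy⟩) ∨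
    (d ≤ (x : ℕ) ∧ d ≤ (y : ℕ))
  iseqv := by
    constructor
    · intro x
      by_cases h : (x : ℕ) < d
      · exact Or.inl ⟨h, h, σ.refl _⟩
      · exact Or.inr ⟨by omega, by omega⟩
    · rintro x y (⟨hx, hy, h⟩ | ⟨hx, hy⟩)
      · exact Or.inl ⟨hy, hx, σ.symm h⟩
      · exact Or.inr ⟨hy, hx⟩
    · rintro x y z (⟨hx, hy, h⟩ | ⟨hx, hy⟩) (⟨hy', hz, h'⟩ | ⟨hy', hz⟩)
      · exact Or.inl ⟨hx, hz, σ.trans h h'⟩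
      · omega
      · omega
      · exact Or.inr ⟨hx, hz⟩

noncomputable instance setoidLFO (d : ℕ) : LocallyFiniteOrder (Setoid (Fin d)) :=
  Fintype.toLocallyFiniteOrder

/-- The Möbius function of the lattice of set partitions, with values in `ℚ`. -/
noncomputable def muS {d : ℕ} (a b : Setoid (Fin d)) : ℚ :=
  IncidenceAlgebra.mu ℚ a b

/-- Falling factorial `⟨m⟩_i = m(m-1)⋯(m-i+1)` as a rational number. -/
def ffact (m i : ℕ) : ℚ := ∏ j ∈ Finset.range i, ((m : ℚ) - j)

/-- Rising factorial `(b)_i = b(b+1)⋯(b+i-1)` as a rational number. -/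
def rfact (b i : ℕ) : ℚ := ∏ j ∈ Finset.range i, ((b : ℚ) + j)

/-- The path `P_{n+1}` with edges `v_i v_{i+1}`. -/
def pathEnds (n : ℕ) : Fin n → Sym2 (Fin (n + 1)) :=
  fun e => s(e.castSucc, e.succ)

/-- The cycle `C_{n+1}` with edges `v_i v_{i+1}` (indices mod `n+1`). -/
def cycleEnds (n : ℕ) : Fin (n + 1) → Sym2 (Fin (n + 1)) :=
  fun i => s(i, i + 1)

/-- The commutative chromatic symmetric function `X_G` in `N` variables. -/
noncomputable def Xcomm {d : ℕ} {ε : Type*} (ends : ε → Sym2 (Fin d)) (N : ℕ) :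
    MvPolynomial (Fin N) ℚ :=
  ∑ κ : Fin d → Fin N, if Proper ends κ then ∏ i, MvPolynomial.X (κ i) else 0

section Orientations

variable {V : Type*} {ε : Type*}

/-- `o` is an orientation of the graph with edge endpoints `ends`. -/
def IsOrient (ends : ε → Sym2 V) (o : ε → V × V) : Prop :=
  ∀ e, s((o e).1, (o e).2) = ends e

/-- An orientation is acyclic when it admits no directed cycle. -/
def Acyclic (o : ε → V × V) : Prop :=
  ∀ v : V, ¬ Relation.TransGen (fun a b => ∃ e, o e = (a, b)) v v

/-- `v` is a sink: every edge incident to `v` is directed toward `v`. -/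
def IsSink (o : ε → V × V) (v : V) : Prop := ∀ e, (o e).1 ≠ v

/-- The set of acyclic orientations with unique sink `v₀`. -/
def Aset (ends : ε → Sym2 V) (v₀ : V) : Set (ε → V × V) :=
  {o | IsOrient ends o ∧ Acyclic o ∧ IsSink o v₀ ∧ ∀ v, IsSink o v → v = v₀}

end Orientations

/-- A circuit: a closed walk `u_0, u_1, …, u_m, u_0` with distinct vertices and
distinct edges. -/
structure Circuit {d : ℕ} {ε : Type*} (ends : ε → Sym2 (Fin d)) where
  m : ℕ
  v : Fin (m + 1) → Fin d
  f : Fin (m + 1) → ε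
  hv : Function.Injective v
  hf : Function.Injective f
  he : ∀ k, ends (f k) = s(v k, v (k + 1))

/-- The broken circuit obtained from a circuit: its edge set with the largest
edge removed. -/
noncomputable def broken {d : ℕ} {ε : Type*} [LinearOrder ε] {ends : ε → Sym2 (Fin d)}
    (C : Circuit ends) : Finset ε :=
  (Finset.univ.image C.f).erase
    ((Finset.univ.image C.f).max'
      ⟨C.f 0, Finset.mem_image_of_mem _ (Finset.mem_univ _)⟩)

/-- `P(α)`: partitions `τ ≤ π+(d+1)` whose blocks can be listed as `B_1,…,B_l`
with `|B_i| = α_i` and `d+1 ∈ B_1`. -/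
def Pset {d : ℕ} (π : Setoid (Fin (d + 1))) (l : ℕ) (α : Fin l → ℕ) :
    Set (Setoid (Fin (d + 2))) :=
  {τ | τ ≤ addLast π ∧ ∃ B : Fin l → Finset (Fin (d + 2)),
    (∀ x y, τ x y ↔ ∃ i, x ∈ B i ∧ y ∈ B i) ∧
    (∀ i j, i ≠ j → Disjoint (B i) (B j)) ∧
    (∀ i, (B i).card = α i) ∧
    ∃ hl : 0 < l, Fin.last (d + 1) ∈ B ⟨0, hl⟩}

/-- `G + K_{m+1}` : attach a complete graph on `{v_{d}, v_{d+1}, …, v_{d+m}}`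
(`m` new vertices) to the last vertex of a graph `G` on `d+1` vertices. -/
def attachEnds {d : ℕ} {ε : Type*} (ends : ε → Sym2 (Fin (d + 1))) (m : ℕ) :
    ε ⊕ {p : Fin (m + 1) × Fin (m + 1) // p.1 < p.2} → Sym2 (Fin (d + 1 + m))
  | Sum.inl e => (ends e).map (fun x : Fin (d + 1) => (⟨(x : ℕ), by omega⟩ : Fin (d + 1 + m)))
  | Sum.inr p => s(⟨d + (p.1.1 : ℕ), by omega⟩, ⟨d + (p.1.2 : ℕ), by omega⟩)

/-- The disjoint union `G ⊎ K_m`, with the clique on the `m` new vertices. -/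
def disjEnds {d : ℕ} {ε : Type*} (ends : ε → Sym2 (Fin d)) (m : ℕ) :
    ε ⊕ {p : Fin m × Fin m // p.1 < p.2} → Sym2 (Fin (d + m))
  | Sum.inl e => (ends e).map (Fin.castAdd m)
  | Sum.inr p => s(Fin.natAdd d p.1.1, Fin.natAdd d p.1.2)

/-! Sort the words `w` by whether their last two letters agree. If they differ, the edge
`v_{d-1} v_d` imposes no condition beyond those of `G ∖ e`, and `↑` contributes nothing. If they
agree, `w` is not proper for `G`, and `w` is proper for `G ∖ e` exactly when its truncation is
proper for `G / e`, since `w` factors through the collapsing vertex map. -/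

theorem proper_map_iff {d d' : ℕ} {ε C : Type*} (ends : ε → Sym2 (Fin d)) (f : Fin d → Fin d')
    (w : Fin d' → C) : Proper (fun e => (ends e).map f) w ↔ Proper ends (w ∘ f) := by
  constructor
  · intro hw e i j hij
    exact hw e (f i) (f j) (by simp only [hij, Sym2.map_mk])
  · intro hw e i j hij
    obtain ⟨a, b, hab⟩ : ∃ a b, ends e = s(a, b) := ⟨_, _, (Quot.out_eq (ends e)).symm⟩
    simp only [hab, Sym2.map_mk, Sym2.eq_iff] at hij
    rcases hij with ⟨rfl, rfl⟩ | ⟨rfl, rfl⟩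
    · exact hw e a b hab
    · exact (hw e a b hab).symm

theorem proper_iff_proper_delete {d : ℕ} {ε C : Type*} {ends : ε → Sym2 (Fin d)} {e₀ : ε}
    {a b : Fin d} (he : ends e₀ = s(a, b)) (w : Fin d → C) :
    Proper ends w ↔ Proper (fun e : {e : ε // e ≠ e₀} => ends e.1) w ∧ w a ≠ w b := by
  refine ⟨fun hw => ⟨fun e => hw e.1, hw e₀ a b he⟩, fun ⟨hw, hab⟩ e i j hij => ?_⟩
  by_cases hee : e = e₀
  · subst hee
    rw [he, Sym2.eq_iff] at hij
    rcases hij with ⟨rfl, rfl⟩ | ⟨rfl, rfl⟩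
    · exact hab
    · exact hab.symm
  · exact hw ⟨e, hee⟩ i j hij

theorem comp_castSucc_collapse {n : ℕ} {C : Type*} {w : Fin (n + 2) → C}
    (hw : w (Fin.last (n + 1)) = w ⟨n, by omega⟩) : (w ∘ Fin.castSucc) ∘ collapse = w := by
  funext i
  by_cases hi : (i : ℕ) < n + 1
  · simp [collapse, hi]
  · obtain rfl : i = Fin.last (n + 1) := Fin.ext (by simp; omega)
    simp [collapse, hw]

/-- Deletion-Contraction: for `e = v_{d-1} v_d`,
`Y_G = Y_{G∖e} - (Y_{G/e})↑`, the contracted vertex being labeled `v_{d-1}`. -/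
theorem deletion_contraction {d : ℕ} {ε : Type*} (ends : ε → Sym2 (Fin (d + 2))) (e₀ : ε)
    (he : ends e₀ = s((⟨d, by omega⟩ : Fin (d + 2)), Fin.last (d + 1))) :
    Y ends =
      Y (fun e : {e : ε // e ≠ e₀} => ends e.1)
        - up (Y (fun e : {e : ε // e ≠ e₀} => (ends e.1).map collapse)) := by
  funext w
  have hdel := proper_iff_proper_delete he w
  by_cases hw : w (Fin.last (d + 1)) = w ⟨d, by omega⟩
  · have hcon : Proper (fun e : {e : ε // e ≠ e₀} => (ends e.1).map collapse)
        (fun i => w i.castSucc) ↔ Proper (fun e : {e : ε // e ≠ e₀} => ends e.1) w := by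
      rw [proper_map_iff]
      exact iff_of_eq (congrArg _ (comp_castSucc_collapse hw))
    simp [Y, up, hw, hdel, hcon]
  · simp [Y, up, hw, hdel, Ne.symm hw]
end

section
/- For any graph G on d vertices, Y_G = Σ_{S ⊆ E(G)} (−1)^{|S|} p_{π(S)}, where π(S) is the set partition of [d] given by the connected components of the spanning subgraph (V(G), S), and p_π is the noncommutative power sum symmetric function. -/
open Finset

attribute [local instance] Classical.propDecidable

/-! Fix a word `w`. Since `π(S)` is the equivalence closure of the edges of `S`, `p_{π(S)}(w) = 1`
exactly when every edge of `S` is monochromatic under `w`, so the coefficient of `w` on the right-hand side is the alternating sum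
`Σ_{S ⊆ M(w)} (-1)^{|S|}` over subsets of the set `M(w)` of monochromatic edges. This is `1` if
`M(w) = ∅`, i.e. if `w` is a proper colouring, and `0` otherwise. -/

section MonochromaticEdges

variable {d : ℕ} {ε C : Type*} (ends : ε → Sym2 (Fin d)) (w : Fin d → C)

def IsMonochromatic (e : ε) : Prop :=
  ∀ i j, ends e = s(i, j) → w i = w j

noncomputable def monochromaticEdges [Fintype ε] : Finset ε :=
  univ.filter (IsMonochromatic ends w)

variable {ends w}

theorem isMonochromatic_iff_exists_eq {e : ε} :
    IsMonochromatic ends w e ↔ ∃ i j, ends e = s(i, j) ∧ w i = w j := by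
  constructor
  · intro h
    obtain ⟨⟨i, j⟩, hij⟩ := (ends e).exists_rep
    exact ⟨i, j, hij.symm, h i j hij.symm⟩
  · rintro ⟨i, j, hij, hw⟩ a b hab
    rcases Sym2.eq_iff.mp (hij.symm.trans hab) with ⟨rfl, rfl⟩ | ⟨rfl, rfl⟩
    exacts [hw, hw.symm]

theorem proper_iff_monochromaticEdges_eq_empty [Fintype ε] :
    Proper ends w ↔ monochromaticEdges ends w = ∅ := by
  simp only [monochromaticEdges, filter_eq_empty_iff, mem_univ, true_implies,
    isMonochromatic_iff_exists_eq, Proper, not_exists, not_and]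

theorem components_le_ker_iff [Fintype ε] {S : Finset ε} :
    components ends S ≤ Setoid.ker w ↔ S ⊆ monochromaticEdges ends w := by
  constructor
  · intro h e he
    exact mem_filter.mpr ⟨mem_univ e, fun i j hij => h (Relation.EqvGen.rel _ _ ⟨e, he, hij⟩)⟩
  · intro hS
    refine Setoid.eqvGen_le ?_
    rintro i j ⟨e, he, hij⟩
    exact (mem_filter.mp (hS he)).2 i j hij

end MonochromaticEdges

theorem pFun_components_apply {d : ℕ} {ε : Type*} [Fintype ε] (ends : ε → Sym2 (Fin d))
    (S : Finset ε) (w : Fin d → ℕ) :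
    pFun (components ends S) w = if S ⊆ monochromaticEdges ends w then 1 else 0 :=
  if_congr components_le_ker_iff rfl rfl

theorem sum_powerset_neg_one_pow_card_eq_ite {α R : Type*} [Ring R] (x : Finset α) :
    ∑ m ∈ x.powerset, (-1 : R) ^ m.card = if x = ∅ then 1 else 0 := by
  classical
  exact_mod_cast congrArg (Int.cast : ℤ → R) sum_powerset_neg_one_pow_card

/-- Power sum expansion: `Y_G = Σ_{S ⊆ E} (-1)^{|S|} p_{π(S)}`. -/
theorem Y_eq_sum_powerSum {d : ℕ} {ε : Type*} [Fintype ε] (ends : ε → Sym2 (Fin d)) :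
    Y ends = ∑ S : Finset ε, ((-1 : ℚ) ^ S.card) • pFun (components ends S) := by
  funext w
  simp only [Finset.sum_apply, Pi.smul_apply, smul_eq_mul, pFun_components_apply, mul_ite, mul_one,
    mul_zero]
  rw [← sum_filter, filter_subset_univ, sum_powerset_neg_one_pow_card_eq_ite]
  exact if_congr proper_iff_monochromaticEdges_eq_empty rfl rfl
end

section
/- In the partition lattice Π_{d+1}, the noncommutative elementary symmetric functions satisfy e_π↑ = Σ_{σ ≤ π} [μ(0̂,σ)/μ(0̂, σ+(d+1))] Σ_{τ ≤ σ+(d+1)} μ(τ, σ+(d+1)) e_τ for any π ∈ Π_d, where σ+(d+1) is σ with d+1 added to the block containing d, and μ is the Möbius function of the partition lattice. -/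
open Finset

attribute [local instance] Classical.propDecidable

/-!
Expanding `e_π = ∑_{σ ≤ π} μ(0̂,σ) p_σ`, applying `↑` termwise with `p_σ↑ = p_{σ+(d+1)}`, and using
the Möbius inversion `∑_{τ ≤ ρ} μ(τ,ρ) e_τ = μ(0̂,ρ) p_ρ` for `ρ = σ+(d+1)` gives the formula, once
`μ(0̂,ρ) ≠ 0` is known. In fact `μ(0̂,ρ)` has sign `(-1)^rank(ρ)`: for an atom `a ≤ ρ`, Weisner's
theorem writes `μ(0̂,ρ)` as minus the sum of `μ(0̂,x)` over the `x ≠ ρ` with `x ⊔ a = ρ`, and each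
such `x` has exactly one block more than `ρ`.
-/

namespace IncidenceAlgebra

variable {𝕜 α : Type*} [Ring 𝕜] [Lattice α] [OrderBot α] [LocallyFiniteOrder α] [DecidableEq α]

theorem sum_mu_bot_filter_sup_eq {a : α} (ha : ⊥ < a) (b : α) :
    ∑ x ∈ Iic b with x ⊔ a = b, mu 𝕜 ⊥ x = 0 := by
  calc ∑ x ∈ Iic b with x ⊔ a = b, mu 𝕜 ⊥ x
      = ∑ x ∈ Iic b, ∑ y ∈ Icc (x ⊔ a) b, mu 𝕜 ⊥ x * mu 𝕜 y b := by
        rw [sum_filter]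
        refine sum_congr rfl fun x _ => ?_
        rw [← mul_sum, sum_Icc_mu_left, mul_ite, mul_one, mul_zero]
    _ = ∑ y ∈ Icc a b, ∑ x ∈ Iic y, mu 𝕜 ⊥ x * mu 𝕜 y b := by
        refine sum_comm' fun x y => ?_
        simp only [mem_Iic, mem_Icc, sup_le_iff]
        exact ⟨fun ⟨_, ⟨hxy, hay⟩, hyb⟩ => ⟨hxy, hay, hyb⟩,
          fun ⟨hxy, hay, hyb⟩ => ⟨hxy.trans hyb, ⟨hxy, hay⟩, hyb⟩⟩
    _ = 0 := by
        refine sum_eq_zero fun y hy => ?_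
        rw [← sum_mul, ← Icc_bot, sum_Icc_mu_right, if_neg, zero_mul]
        rintro rfl
        exact (mem_Icc.1 hy).1.not_gt ha

end IncidenceAlgebra

namespace Setoid

variable {α : Type*}

noncomputable def numBlocks (r : Setoid α) : ℕ := Nat.card (Quotient r)

def ofPair (i j : α) : Setoid α := Relation.EqvGen.setoid fun x y => x = i ∧ y = j

theorem ofPair_le_iff {i j : α} {r : Setoid α} : ofPair i j ≤ r ↔ r i j :=
  ⟨fun h => h (Relation.EqvGen.rel _ _ ⟨rfl, rfl⟩),
    fun h => eqvGen_le <| by rintro _ _ ⟨rfl, rfl⟩; exact h⟩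

theorem bot_lt_ofPair {i j : α} (hij : i ≠ j) : ⊥ < ofPair i j :=
  bot_lt_iff_ne_bot.2 fun h => hij <| by
    simpa [bot_def] using ofPair_le_iff.1 h.le

theorem inf_ker_eq_sup_ofPair_eq_self {r : Setoid α} {i j : α} (hij : i ≠ j) (h : r i j) :
    r ⊓ ker (· = i) ⊔ ofPair i j = r := by
  refine le_antisymm (sup_le inf_le_left (ofPair_le_iff.2 h)) fun a b hab => ?_
  set s := r ⊓ ker (· = i) ⊔ ofPair i j
  have hsplit {x y : α} (hxy : r x y) (hx : x ≠ i) (hy : y ≠ i) : s x y :=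
    le_sup_left (a := r ⊓ ker (· = i)) ⟨hxy, by simp [hx, hy]⟩
  have hij' : s i j := ofPair_le_iff.1 le_sup_right
  by_cases ha : a = i <;> by_cases hb : b = i
  · subst ha hb; exact s.refl _
  · subst ha; exact s.trans hij' (hsplit (r.trans (r.symm h) hab) (Ne.symm hij) hb)
  · subst hb; exact s.trans (hsplit (r.trans hab h) ha (Ne.symm hij)) (s.symm hij')
  · exact hsplit hab ha hb

theorem inf_ker_eq_ne_self {r : Setoid α} {i j : α} (hij : i ≠ j) (h : r i j) :
    r ⊓ ker (· = i) ≠ r := fun he => by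
  have h' : (r ⊓ ker (· = i)) i j := by rw [he]; exact h
  exact hij (by simpa using h'.2 : j = i).symm

theorem rel_of_sup_ofPair {r : Setoid α} {i j a b : α} (hab : (r ⊔ ofPair i j) a b)
    (ha : ¬ r a i) (hb : ¬ r b i) : r a b := by
  let f : α → Quotient r := fun x => if r x j then ⟦i⟧ else ⟦x⟧
  have hle : r ⊔ ofPair i j ≤ ker f := by
    refine sup_le (fun x y hxy => ?_) (ofPair_le_iff.2 ?_)
    · have : r x j ↔ r y j := ⟨r.trans (r.symm hxy), r.trans hxy⟩
      simp only [ker_def, f, this, Quotient.sound hxy]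
    · simp [f]
  have hf : f a = f b := hle hab
  simp only [f] at hf
  split_ifs at hf with hj hj' hj'
  · exact r.trans hj (r.symm hj')
  · exact absurd (r.symm (Quotient.exact hf)) hb
  · exact absurd (Quotient.exact hf) ha
  · exact Quotient.exact hf

theorem numBlocks_bot : (⊥ : Setoid α).numBlocks = Nat.card α :=
  Nat.card_congr quotientBotEquiv

theorem exists_ne_rel_of_ne_bot {r : Setoid α} (hr : r ≠ ⊥) : ∃ i j, i ≠ j ∧ r i j := by
  by_contra! h
  exact hr (le_bot_iff.1 fun x y hxy => by_contra fun hne => h x y hne hxy)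

variable [Finite α]

theorem numBlocks_antitone : Antitone (numBlocks (α := α)) := fun _ _ h =>
  Nat.card_le_card_of_surjective (map_of_le h) fun q => q.inductionOn fun x => ⟨⟦x⟧, rfl⟩

theorem numBlocks_strictAnti : StrictAnti (numBlocks (α := α)) := by
  intro r s hrs
  refine (numBlocks_antitone hrs.le).lt_of_ne fun hc => hrs.not_ge fun x y hxy => ?_
  have hsurj : Function.Surjective (map_of_le hrs.le) := fun q => q.inductionOn fun x => ⟨⟦x⟧, rfl⟩
  exact Quotient.exact ((hsurj.bijective_of_nat_card_le hc.ge).1 (Quotient.sound hxy :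
    map_of_le hrs.le ⟦x⟧ = map_of_le hrs.le ⟦y⟧))

theorem numBlocks_le_numBlocks_sup_ofPair_add_one (r : Setoid α) (i j : α) :
    r.numBlocks ≤ (r ⊔ ofPair i j).numBlocks + 1 := by
  let g : Quotient r → Option (Quotient (r ⊔ ofPair i j)) := fun q =>
    if q = ⟦i⟧ then none else some (map_of_le le_sup_left q)
  have hg : Function.Injective g := by
    intro q q' hqq'
    induction q using Quotient.inductionOn with | h a => ?_
    induction q' using Quotient.inductionOn with | h b => ?_
    simp only [g] at hqq'
    split_ifs at hqq' with ha hb hb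
    · rw [ha, hb]
    · exact Quotient.sound <|
        rel_of_sup_ofPair (Quotient.exact (Option.some_injective _ hqq')) (mt Quotient.sound ha)
          (mt Quotient.sound hb)
  rw [numBlocks, numBlocks, ← Finite.card_option]
  exact Nat.card_le_card_of_injective g hg

end Setoid

-- `m + numBlocks ρ` has the parity of the rank `m - numBlocks ρ` and avoids truncated subtraction.
theorem neg_one_pow_mul_muS_bot_pos {m : ℕ} (ρ : Setoid (Fin m)) :
    0 < (-1 : ℚ) ^ (m + ρ.numBlocks) * muS ⊥ ρ := by
  induction ρ using WellFoundedLT.induction with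
  | ind ρ ih =>
    rcases eq_or_ne ρ ⊥ with rfl | hρ
    · simp [muS, Setoid.numBlocks_bot, ← two_mul, pow_mul]
    obtain ⟨i, j, hij, hρij⟩ := Setoid.exists_ne_rel_of_ne_bot hρ
    set T := {x ∈ Iic ρ | x ⊔ Setoid.ofPair i j = ρ}
    have hρT : ρ ∈ T := mem_filter.2 ⟨mem_Iic.2 le_rfl, sup_eq_left.2 (Setoid.ofPair_le_iff.2 hρij)⟩
    have hrec : muS ⊥ ρ = -∑ x ∈ T.erase ρ, muS ⊥ x := by
      rw [eq_neg_iff_add_eq_zero, add_sum_erase T _ hρT]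
      exact IncidenceAlgebra.sum_mu_bot_filter_sup_eq (Setoid.bot_lt_ofPair hij) ρ
    have hT : ∀ x ∈ T.erase ρ, x < ρ ∧ x.numBlocks = ρ.numBlocks + 1 := by
      intro x hx
      obtain ⟨hxρ, hx⟩ := mem_erase.1 hx
      obtain ⟨-, hsup⟩ := mem_filter.1 hx
      have hlt : x < ρ := lt_of_le_of_ne (hsup ▸ le_sup_left) hxρ
      have hgt := Setoid.numBlocks_strictAnti hlt
      have hle := Setoid.numBlocks_le_numBlocks_sup_ofPair_add_one x i j
      rw [hsup] at hle
      exact ⟨hlt, by omega⟩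
    have hne : (T.erase ρ).Nonempty := by
      refine ⟨ρ ⊓ Setoid.ker (· = i), mem_erase.2 ⟨Setoid.inf_ker_eq_ne_self hij hρij, ?_⟩⟩
      exact mem_filter.2 ⟨mem_Iic.2 inf_le_left, Setoid.inf_ker_eq_sup_ofPair_eq_self hij hρij⟩
    calc 0 < ∑ x ∈ T.erase ρ, (-1 : ℚ) ^ (m + x.numBlocks) * muS ⊥ x :=
          sum_pos (fun x hx => ih x (hT x hx).1) hne
      _ = ∑ x ∈ T.erase ρ, -((-1 : ℚ) ^ (m + ρ.numBlocks) * muS ⊥ x) :=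
          sum_congr rfl fun x hx => by rw [(hT x hx).2, ← add_assoc, pow_succ]; ring
      _ = (-1 : ℚ) ^ (m + ρ.numBlocks) * muS ⊥ ρ := by
          rw [hrec, sum_neg_distrib, mul_neg, mul_sum]

theorem muS_bot_ne_zero {m : ℕ} (ρ : Setoid (Fin m)) : muS ⊥ ρ ≠ 0 :=
  right_ne_zero_of_mul (neg_one_pow_mul_muS_bot_pos ρ).ne'

section NCF

variable {m : ℕ}

theorem pFun_apply (σ : Setoid (Fin m)) (w : Fin m → ℕ) :
    pFun σ w = if σ ≤ Setoid.ker w then 1 else 0 :=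
  if_congr ⟨fun h _ _ => h _ _, fun h _ _ => @h _ _⟩ rfl rfl

theorem eFun_apply_eq_sum (π : Setoid (Fin m)) (w : Fin m → ℕ) :
    eFun π w = ∑ σ ∈ Iic π, muS ⊥ σ * pFun σ w := by
  have hdisj : (∀ i j, i ≠ j → π i j → w i ≠ w j) ↔ ⊥ = π ⊓ Setoid.ker w :=
    ⟨fun h => (le_bot_iff.1 fun x y hxy => by_contra fun hne => h x y hne hxy.1 hxy.2).symm,
      fun h i j hij hπ hw => hij (show (⊥ : Setoid (Fin m)) i j by rw [h]; exact ⟨hπ, hw⟩)⟩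
  calc eFun π w = if ⊥ = π ⊓ Setoid.ker w then 1 else 0 := if_congr hdisj rfl rfl
    _ = ∑ σ ∈ Iic (π ⊓ Setoid.ker w), muS ⊥ σ := (IncidenceAlgebra.sum_Icc_mu_right _ _).symm
    _ = ∑ σ ∈ Iic π, muS ⊥ σ * pFun σ w := by
        simp only [pFun_apply, mul_ite, mul_one, mul_zero, ← sum_filter]
        congr 1
        ext σ
        simp [le_inf_iff]

theorem eFun_eq_sum_smul_pFun (π : Setoid (Fin m)) :
    eFun π = ∑ σ ∈ Iic π, muS ⊥ σ • pFun σ :=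
  funext fun w => by simp [eFun_apply_eq_sum]

theorem sum_muS_smul_eFun (ρ : Setoid (Fin m)) :
    ∑ τ ∈ Iic ρ, muS τ ρ • eFun τ = muS ⊥ ρ • pFun ρ :=
  funext fun w => by
    simpa [muS] using (IncidenceAlgebra.moebius_inversion_bot (fun σ => muS ⊥ σ * pFun σ w)
      (fun τ => eFun τ w) (fun τ => eFun_apply_eq_sum τ w) ρ).symm

end NCF

noncomputable def upLinearMap (n : ℕ) : NCF (n + 1) →ₗ[ℚ] NCF (n + 2) where
  toFun := up
  map_add' f g := funext fun w => by simp only [up, Pi.add_apply]; split_ifs <;> simp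
  map_smul' c f := funext fun w => by simp only [up, Pi.smul_apply]; split_ifs <;> simp

theorem upLinearMap_apply {n : ℕ} (f : NCF (n + 1)) : upLinearMap n f = up f := rfl

section AddLast

variable {d : ℕ}

theorem addLast_le_iff {σ : Setoid (Fin (d + 1))} {ρ : Setoid (Fin (d + 2))} :
    addLast σ ≤ ρ ↔ ρ (Fin.last (d + 1)) (Fin.last d).castSucc ∧ σ ≤ ρ.comap Fin.castSucc := by
  refine ⟨fun h => ⟨h ?_, fun a b hab => h (Or.inr (Or.inl ⟨a.isLt, b.isLt, hab⟩))⟩, ?_⟩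
  · exact Or.inr (Or.inr ⟨Or.inr ⟨le_rfl, trivial⟩, Or.inl ⟨d.lt_succ_self, σ.refl _⟩⟩)
  rintro ⟨hlast, hσ⟩ x y (rfl | ⟨hx, hy, h⟩ | ⟨hx, hy⟩)
  · exact ρ.refl x
  · exact hσ h
  · have hblock (z : Fin (d + 2)) (hz : (∃ hz : (z : ℕ) < d + 1, σ ⟨z, hz⟩ (Fin.last d)) ∨
        (d + 1 ≤ (z : ℕ) ∧ True)) : ρ z (Fin.last d).castSucc := by
      rcases hz with ⟨hz, h⟩ | ⟨hz, -⟩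
      · exact hσ h
      · obtain rfl : z = Fin.last (d + 1) := Fin.ext (by have := z.isLt; simp; omega)
        exact hlast
    exact ρ.trans (hblock x hx) (ρ.symm (hblock y hy))

theorem up_pFun (σ : Setoid (Fin (d + 1))) : up (pFun σ) = pFun (addLast σ) := by
  funext w
  have hle : addLast σ ≤ Setoid.ker w ↔
      w (Fin.last (d + 1)) = w ⟨d, by omega⟩ ∧ σ ≤ Setoid.ker fun i => w i.castSucc :=
    addLast_le_iff
  by_cases h : w (Fin.last (d + 1)) = w ⟨d, by omega⟩ <;> simp [up, h, pFun_apply, hle]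

end AddLast

/-- The Möbius-function formula for `e_π↑`. -/
theorem up_eFun_eq_moebius_sum {d : ℕ} (π : Setoid (Fin (d + 1))) :
    up (eFun π) =
      ∑ σ : Setoid (Fin (d + 1)),
        if σ ≤ π then
          (muS ⊥ σ / muS ⊥ (addLast σ)) •
            ∑ τ : Setoid (Fin (d + 2)),
              if τ ≤ addLast σ then muS τ (addLast σ) • eFun τ else 0
        else 0 := by
  simp only [← sum_filter, filter_ge_eq_Iic]
  calc up (eFun π) = ∑ σ ∈ Iic π, muS ⊥ σ • pFun (addLast σ) := by
        change upLinearMap d _ = _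
        simp only [eFun_eq_sum_smul_pFun, map_sum, map_smul, upLinearMap_apply, up_pFun]
    _ = _ := sum_congr rfl fun σ _ => by
        rw [sum_muS_smul_eFun, smul_smul, div_mul_cancel₀ _ (muS_bot_ne_zero _)]
end

section
/- Write e_π↑ = Σ_{τ ∈ Π_{d+1}} c_τ e_τ for π ∈ Π_d with block B_π containing d, |B_π| = b. Then c_τ = 0 unless τ ≤ π+(d+1); moreover for any composition α, letting P(α) be the set of τ = B_1/.../B_l ≤ π+(d+1) with |B_i| = α_i and d+1 ∈ B_1, the sum Σ_{τ ∈ P(α)} c_τ equals 1/b if P(α) = {π/d+1}, equals −1/b if P(α) = {π+(d+1)}, and equals 0 otherwise. -/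
open Finset

attribute [local instance] Classical.propDecidable

namespace UpProof
open Equiv Equiv.Perm Finset

variable {n : ℕ}

lemma bot_iff {i j : Fin n} : (⊥ : Setoid (Fin n)) i j ↔ i = j := by
  change ⇑(⊥ : Setoid (Fin n)) i j ↔ i = j
  rw [Setoid.bot_def]

lemma setoid_le_iff {r s : Setoid (Fin n)} : r ≤ s ↔ ∀ x y, r x y → s x y :=
  ⟨fun h x y hxy => Setoid.le_def.mp h hxy, fun h => Setoid.le_def.mpr fun {x y} => h x y⟩

lemma ne_bot_iff {u : Setoid (Fin n)} : u ≠ ⊥ ↔ ∃ a b, a ≠ b ∧ u a b := by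
  constructor
  · intro hu
    by_contra h
    push_neg at h
    refine hu (le_bot_iff.mp (setoid_le_iff.mpr fun x y hxy => ?_))
    refine bot_iff.mpr ?_
    by_contra hne
    exact h x y hne hxy
  · rintro ⟨a, b, hab, hu⟩ rfl
    exact hab (bot_iff.mp hu)

/-- The setoid of cycles of a permutation. -/
def pSet (p : Equiv.Perm (Fin n)) : Setoid (Fin n) := Equiv.Perm.SameCycle.setoid p

lemma pSet_apply {p : Equiv.Perm (Fin n)} {i j : Fin n} : pSet p i j ↔ p.SameCycle i j := Iff.rfl

lemma perm_apply_inv_self' {α : Type*} (s : Equiv.Perm α) (x : α) : s (s⁻¹ x) = x :=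
  (Equiv.eq_symm_apply s).mp rfl

lemma perm_inv_apply_self' {α : Type*} (s : Equiv.Perm α) (x : α) : s⁻¹ (s x) = x :=
  Equiv.Perm.inv_eq_iff_eq.mpr rfl

lemma pSet_le_iff {p : Equiv.Perm (Fin n)} {u : Setoid (Fin n)} :
    pSet p ≤ u ↔ ∀ i, u i (p i) := by
  constructor
  · intro h i
    exact Setoid.le_def.mp h (pSet_apply.mpr ⟨1, by simp⟩)
  · intro h
    refine setoid_le_iff.mpr fun x y hxy => ?_
    obtain ⟨k, hk⟩ := pSet_apply.mp hxy
    clear hxy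
    subst hk
    induction k using Int.induction_on with
    | zero => simpa using u.refl x
    | succ k IH =>
        have hrw : p ^ ((k : ℤ) + 1) = p * p ^ (k : ℤ) := by
          rw [add_comm, zpow_add, zpow_one]
        rw [hrw, Equiv.Perm.mul_apply]
        exact u.trans IH (h _)
    | pred k IH =>
        have hrw : p ^ (-(k : ℤ) - 1) = p⁻¹ * p ^ (-(k : ℤ)) := by
          rw [sub_eq_add_neg, add_comm, zpow_add, zpow_neg_one]
        rw [hrw, Equiv.Perm.mul_apply]
        refine u.trans IH ?_
        have := h (p⁻¹ ((p ^ (-(k : ℤ))) x))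
        rw [perm_apply_inv_self'] at this
        exact u.symm this

/-- Rational-valued sign. -/
def sgn (p : Equiv.Perm (Fin n)) : ℚ := ((Equiv.Perm.sign p : ℤ) : ℚ)

lemma sgn_ne_zero (p : Equiv.Perm (Fin n)) : sgn p ≠ 0 := by
  rcases Int.units_eq_one_or (Equiv.Perm.sign p) with h | h <;> simp [sgn, h]

lemma sum_sign_subgroup (u : Setoid (Fin n)) :
    (∑ p : Equiv.Perm (Fin n), if ∀ i, u i (p i) then sgn p else 0)
      = if u = ⊥ then 1 else 0 := by
  rcases eq_or_ne u ⊥ with rfl | hu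
  · rw [if_pos rfl]
    have : ∀ p : Equiv.Perm (Fin n), (∀ i, (⊥ : Setoid (Fin n)) i (p i)) ↔ p = 1 := by
      intro p
      constructor
      · intro h
        exact Equiv.ext fun x => by
          rw [Equiv.Perm.one_apply]; exact (bot_iff.mp (h x)).symm
      · rintro rfl i; exact bot_iff.mpr rfl
    calc (∑ p : Equiv.Perm (Fin n), if ∀ i, (⊥ : Setoid (Fin n)) i (p i) then sgn p else 0)
        = ∑ p : Equiv.Perm (Fin n), if p = 1 then sgn p else 0 := by
          refine Finset.sum_congr rfl fun p _ => ?_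
          rw [if_congr (this p) rfl rfl]
      _ = 1 := by rw [Finset.sum_ite_eq' Finset.univ 1 sgn]; simp [sgn]
  · rw [if_neg hu]
    obtain ⟨a, b, hab, huab⟩ := ne_bot_iff.mp hu
    have key : ∀ x, u (Equiv.swap a b x) x := by
      intro x
      rcases eq_or_ne x a with rfl | hxa
      · rw [Equiv.swap_apply_left]; exact u.symm huab
      rcases eq_or_ne x b with rfl | hxb
      · rw [Equiv.swap_apply_right]; exact huab
      · rw [Equiv.swap_apply_of_ne_of_ne hxa hxb]
    set F : Equiv.Perm (Fin n) → ℚ := fun p => if ∀ i, u i (p i) then sgn p else 0 with hF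
    have hcomp : ∀ p, F (Equiv.swap a b * p) = -(F p) := by
      intro p
      have hcond : (∀ i, u i ((Equiv.swap a b * p) i)) ↔ ∀ i, u i (p i) := by
        constructor
        · intro h i
          exact u.trans (h i) (key (p i))
        · intro h i
          exact u.trans (h i) (u.symm (key (p i)))
      have hsgn : sgn (Equiv.swap a b * p) = -(sgn p) := by
        simp [sgn, Equiv.Perm.sign_swap hab]
      rw [hF]
      by_cases h : ∀ i, u i (p i)
      · simp only [if_pos h, if_pos (hcond.mpr h), hsgn]
      · simp only [if_neg h, if_neg (fun hh => h (hcond.mp hh)), neg_zero]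
    have := Equiv.sum_comp (Equiv.mulLeft (Equiv.swap a b)) F
    have h2 : (∑ p : Equiv.Perm (Fin n), F p) = -∑ p : Equiv.Perm (Fin n), F p := by
      calc (∑ p : Equiv.Perm (Fin n), F p)
          = ∑ p : Equiv.Perm (Fin n), F (Equiv.mulLeft (Equiv.swap a b) p) := this.symm
        _ = ∑ p : Equiv.Perm (Fin n), -(F p) := by
            refine Finset.sum_congr rfl fun p _ => ?_
            rw [Equiv.coe_mulLeft]; exact hcomp p
        _ = -∑ p : Equiv.Perm (Fin n), F p := by rw [Finset.sum_neg_distrib]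
    linarith

end UpProof
namespace UpProof
variable {n : ℕ}

/-- Sum of signs of permutations with cycle setoid exactly `σ`. -/
noncomputable def gfun (σ : Setoid (Fin n)) : ℚ :=
  ∑ p : Equiv.Perm (Fin n), if pSet p = σ then sgn p else 0

lemma sum_g_le (u : Setoid (Fin n)) :
    (∑ σ : Setoid (Fin n), if σ ≤ u then gfun σ else 0) = if u = ⊥ then 1 else 0 := by
  have step1 : ∀ σ : Setoid (Fin n), (if σ ≤ u then gfun σ else 0)
      = ∑ p : Equiv.Perm (Fin n), if σ ≤ u ∧ pSet p = σ then sgn p else 0 := by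
    intro σ
    by_cases h : σ ≤ u
    · simp [gfun, h]
    · simp [h]
  calc (∑ σ : Setoid (Fin n), if σ ≤ u then gfun σ else 0)
      = ∑ σ : Setoid (Fin n), ∑ p : Equiv.Perm (Fin n),
          if σ ≤ u ∧ pSet p = σ then sgn p else 0 :=
        Finset.sum_congr rfl fun σ _ => step1 σ
    _ = ∑ p : Equiv.Perm (Fin n), ∑ σ : Setoid (Fin n),
          if σ ≤ u ∧ pSet p = σ then sgn p else 0 := Finset.sum_comm
    _ = ∑ p : Equiv.Perm (Fin n), if ∀ i, u i (p i) then sgn p else 0 := by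
        refine Finset.sum_congr rfl fun p _ => ?_
        rw [Finset.sum_eq_single (pSet p)]
        · exact if_congr (by simp [pSet_le_iff]) rfl rfl
        · intro σ _ hσ
          exact if_neg fun hh => hσ hh.2.symm
        · intro h; exact absurd (Finset.mem_univ _) h
    _ = if u = ⊥ then 1 else 0 := sum_sign_subgroup u

lemma sum_mu_le (u : Setoid (Fin n)) :
    (∑ σ : Setoid (Fin n), if σ ≤ u then muS ⊥ σ else 0) = if u = ⊥ then 1 else 0 := by
  have h := IncidenceAlgebra.sum_Icc_mu_right (𝕜 := ℚ) (⊥ : Setoid (Fin n)) u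
  have hIcc : Finset.Icc (⊥ : Setoid (Fin n)) u = Finset.univ.filter (fun σ => σ ≤ u) := by
    ext σ; simp [Finset.mem_Icc, bot_le]
  rw [hIcc, Finset.sum_filter] at h
  have : (∑ σ : Setoid (Fin n), if σ ≤ u then muS ⊥ σ else 0)
      = ∑ σ : Setoid (Fin n), if σ ≤ u then IncidenceAlgebra.mu ℚ ⊥ σ else 0 := rfl
  rw [this, h]
  by_cases hu : u = ⊥ <;> simp [hu, eq_comm]

/-- split a `≤ u` sum into the `= u` term and the `< u` terms -/
lemma sum_le_split (u : Setoid (Fin n)) (f : Setoid (Fin n) → ℚ) :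
    (∑ σ : Setoid (Fin n), if σ ≤ u then f σ else 0)
      = f u + ∑ σ : Setoid (Fin n), if σ < u then f σ else 0 := by
  have key : ∀ σ : Setoid (Fin n), (if σ ≤ u then f σ else 0)
      = (if σ = u then f σ else 0) + (if σ < u then f σ else 0) := by
    intro σ
    rcases eq_or_ne σ u with rfl | hne
    · simp [le_refl, lt_irrefl]
    · by_cases h : σ ≤ u
      · rw [if_pos h, if_neg hne, if_pos (lt_of_le_of_ne h hne), zero_add]
      · rw [if_neg h, if_neg hne, if_neg (fun hh => h hh.le), zero_add]
  rw [Finset.sum_congr rfl fun σ _ => key σ, Finset.sum_add_distrib,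
    Finset.sum_ite_eq' Finset.univ u f, if_pos (Finset.mem_univ u)]

lemma gfun_eq_mu (u : Setoid (Fin n)) : gfun u = muS ⊥ u := by
  induction u using WellFoundedLT.induction with
  | ind u IH =>
    have h1 := sum_g_le u
    have h2 := sum_mu_le u
    rw [sum_le_split] at h1 h2
    have h3 : (∑ σ : Setoid (Fin n), if σ < u then gfun σ else 0)
        = ∑ σ : Setoid (Fin n), if σ < u then muS ⊥ σ else 0 := by
      refine Finset.sum_congr rfl fun σ _ => ?_
      by_cases h : σ < u
      · rw [if_pos h, if_pos h, IH σ h]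
      · rw [if_neg h, if_neg h]
    rw [h3] at h1
    have := h1.trans h2.symm
    linarith

end UpProof
namespace UpProof
open Finset
variable {n : ℕ}

/-- cyclic successor within the block of `u` containing `i` -/
noncomputable def nextP (u : Setoid (Fin n)) (i : Fin n) : Fin n :=
  if h : (Finset.univ.filter fun j => u i j ∧ i < j).Nonempty then
    (Finset.univ.filter fun j => u i j ∧ i < j).min' h
  else (Finset.univ.filter fun j => u i j).min' ⟨i, by simp only [Finset.mem_filter, Finset.mem_univ, true_and]; exact u.refl i⟩

lemma nextP_rel (u : Setoid (Fin n)) (i : Fin n) : u i (nextP u i) := by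
  rw [nextP]
  split
  · next h =>
      have := Finset.min'_mem _ h
      simp only [Finset.mem_filter] at this
      exact this.2.1
  · next h =>
      have := Finset.min'_mem (Finset.univ.filter fun j => u i j) ⟨i, by simp only [Finset.mem_filter, Finset.mem_univ, true_and]; exact u.refl i⟩
      simp only [Finset.mem_filter] at this
      exact this.2

lemma nextP_inj (u : Setoid (Fin n)) : Function.Injective (nextP u) := by
  intro i k h
  by_contra hik
  have huik : u i k := u.trans (nextP_rel u i) (u.symm (by rw [h]; exact nextP_rel u k))
  by_cases hi : (Finset.univ.filter fun j => u i j ∧ i < j).Nonempty <;>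
  by_cases hk : (Finset.univ.filter fun j => u k j ∧ k < j).Nonempty
  · -- both nonempty
    have hdi : nextP u i = (Finset.univ.filter fun j => u i j ∧ i < j).min' hi := by
      rw [nextP, dif_pos hi]
    have hdk : nextP u k = (Finset.univ.filter fun j => u k j ∧ k < j).min' hk := by
      rw [nextP, dif_pos hk]
    have hii : i < nextP u i := by
      have := Finset.min'_mem _ hi
      simp only [Finset.mem_filter] at this
      rw [hdi]; exact this.2.2
    have hkk : k < nextP u k := by
      have := Finset.min'_mem _ hk
      simp only [Finset.mem_filter] at this
      rw [hdk]; exact this.2.2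
    rcases lt_or_gt_of_ne hik with hlt | hlt
    · have hkmem : k ∈ Finset.univ.filter fun j => u i j ∧ i < j := by
        simp only [Finset.mem_filter, Finset.mem_univ, true_and]; exact ⟨huik, hlt⟩
      have := Finset.min'_le _ _ hkmem
      rw [← hdi, h] at this
      exact absurd (lt_of_lt_of_le hkk this) (lt_irrefl k)
    · have himem : i ∈ Finset.univ.filter fun j => u k j ∧ k < j := by
        simp only [Finset.mem_filter, Finset.mem_univ, true_and]; exact ⟨u.symm huik, hlt⟩
      have := Finset.min'_le _ _ himem
      rw [← hdk, ← h] at this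
      exact absurd (lt_of_lt_of_le hii this) (lt_irrefl i)
  · -- i nonempty, k empty
    have hdi : nextP u i = (Finset.univ.filter fun j => u i j ∧ i < j).min' hi := by
      rw [nextP, dif_pos hi]
    have hii : i < nextP u i := by
      have := Finset.min'_mem _ hi
      simp only [Finset.mem_filter] at this
      rw [hdi]; exact this.2.2
    have hdk : nextP u k = (Finset.univ.filter fun j => u k j).min' ⟨k, by simp only [Finset.mem_filter, Finset.mem_univ, true_and]; exact u.refl k⟩ := by
      rw [nextP, dif_neg hk]
    have himem : i ∈ Finset.univ.filter fun j => u k j := by simp only [Finset.mem_filter, Finset.mem_univ, true_and]; exact u.symm huik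
    have h1 : nextP u k ≤ i := by rw [hdk]; exact Finset.min'_le _ _ himem
    rw [← h] at h1
    exact absurd (lt_of_lt_of_le hii h1) (lt_irrefl i)
  · -- i empty, k nonempty
    have hdk : nextP u k = (Finset.univ.filter fun j => u k j ∧ k < j).min' hk := by
      rw [nextP, dif_pos hk]
    have hkk : k < nextP u k := by
      have := Finset.min'_mem _ hk
      simp only [Finset.mem_filter] at this
      rw [hdk]; exact this.2.2
    have hdi : nextP u i = (Finset.univ.filter fun j => u i j).min' ⟨i, by simp only [Finset.mem_filter, Finset.mem_univ, true_and]; exact u.refl i⟩ := by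
      rw [nextP, dif_neg hi]
    have hkmem : k ∈ Finset.univ.filter fun j => u i j := by simp only [Finset.mem_filter, Finset.mem_univ, true_and]; exact huik
    have h1 : nextP u i ≤ k := by rw [hdi]; exact Finset.min'_le _ _ hkmem
    rw [h] at h1
    exact absurd (lt_of_lt_of_le hkk h1) (lt_irrefl k)
  · -- both empty
    have h1 : k ≤ i := by
      by_contra hlt
      exact hi ⟨k, by simp only [Finset.mem_filter, Finset.mem_univ, true_and]; exact ⟨huik, lt_of_not_ge hlt⟩⟩
    have h2 : i ≤ k := by
      by_contra hlt
      exact hk ⟨i, by simp only [Finset.mem_filter, Finset.mem_univ, true_and]; exact ⟨u.symm huik, lt_of_not_ge hlt⟩⟩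
    exact hik (le_antisymm h2 h1)

/-- a permutation whose cycles are exactly the blocks of `u` -/
noncomputable def cyclicPerm (u : Setoid (Fin n)) : Equiv.Perm (Fin n) :=
  Equiv.ofBijective (nextP u) (Finite.injective_iff_bijective.mp (nextP_inj u))

lemma cyclicPerm_apply (u : Setoid (Fin n)) (i : Fin n) : cyclicPerm u i = nextP u i := rfl

lemma cyclicPerm_reach (u : Setoid (Fin n)) :
    ∀ m : ℕ, ∀ i j : Fin n, u i j → i ≤ j → (j : ℕ) - (i : ℕ) ≤ m →
      (cyclicPerm u).SameCycle i j := by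
  intro m
  induction m with
  | zero =>
      intro i j hu hle hm
      have : i = j := by
        apply Fin.ext
        have := Fin.le_def.mp hle
        omega
      subst this
      exact Equiv.Perm.SameCycle.refl _ _
  | succ m IH =>
      intro i j hu hle hm
      rcases eq_or_lt_of_le hle with rfl | hlt
      · exact Equiv.Perm.SameCycle.refl _ _
      · have hne : (Finset.univ.filter fun j' => u i j' ∧ i < j').Nonempty :=
          ⟨j, by simp [hu, hlt]⟩
        have hdi : nextP u i = (Finset.univ.filter fun j' => u i j' ∧ i < j').min' hne := by
          rw [nextP, dif_pos hne]
        set i' := nextP u i with hi'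
        have hmem := Finset.min'_mem _ hne
        rw [← hdi] at hmem
        simp only [Finset.mem_filter] at hmem
        have hii' : i < i' := hmem.2.2
        have hui' : u i i' := hmem.2.1
        have hle' : i' ≤ j := by
          rw [hdi]
          exact Finset.min'_le _ _ (by simp only [Finset.mem_filter, Finset.mem_univ, true_and]; exact ⟨hu, hlt⟩)
        have step1 : (cyclicPerm u).SameCycle i i' := ⟨1, by simp [cyclicPerm_apply, hi']⟩
        refine step1.trans (IH i' j (u.trans (u.symm hui') hu) hle' ?_)
        have := Fin.lt_def.mp hii'
        have := Fin.le_def.mp hle'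
        omega

lemma pSet_cyclicPerm (u : Setoid (Fin n)) : pSet (cyclicPerm u) = u := by
  apply le_antisymm
  · exact pSet_le_iff.mpr fun i => by rw [cyclicPerm_apply]; exact nextP_rel u i
  · refine setoid_le_iff.mpr fun x y hxy => ?_
    rcases le_total x y with hle | hle
    · exact pSet_apply.mpr (cyclicPerm_reach u _ x y hxy hle le_rfl)
    · exact pSet_apply.mpr (cyclicPerm_reach u _ y x (u.symm hxy) hle le_rfl).symm

end UpProof
namespace UpProof
variable {n : ℕ}

noncomputable def blocksOf (u : Setoid (Fin n)) : Finset (Finset (Fin n)) :=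
  (Finset.univ.filter fun x => ∃ y, y ≠ x ∧ u x y).image
    fun x => Finset.univ.filter fun y => u x y

lemma support_eq (p : Equiv.Perm (Fin n)) :
    p.support = Finset.univ.filter fun x => ∃ y, y ≠ x ∧ pSet p x y := by
  ext x
  simp only [Equiv.Perm.mem_support, Finset.mem_filter, Finset.mem_univ, true_and]
  constructor
  · intro h
    exact ⟨p x, h, pSet_apply.mpr ⟨1, by simp⟩⟩
  · rintro ⟨y, hy, hsc⟩ hpx
    obtain ⟨k, hk⟩ := pSet_apply.mp hsc
    rw [Equiv.Perm.zpow_apply_eq_self_of_apply_eq_self hpx] at hk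
    exact hy hk.symm

lemma support_cycleOf_eq' (p : Equiv.Perm (Fin n)) {x : Fin n} (hx : x ∈ p.support) :
    (p.cycleOf x).support = Finset.univ.filter fun y => pSet p x y := by
  ext y
  simp only [Equiv.Perm.mem_support_cycleOf_iff, Finset.mem_filter, Finset.mem_univ, true_and,
    pSet_apply]
  exact ⟨fun h => h.1, fun h => ⟨h, hx⟩⟩

lemma image_support_factors (p : Equiv.Perm (Fin n)) :
    p.cycleFactorsFinset.image Equiv.Perm.support = blocksOf (pSet p) := by
  ext s
  constructor
  · intro hs
    obtain ⟨c, hc, rfl⟩ := Finset.mem_image.mp hs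
    obtain ⟨hcyc, hsupp⟩ := Equiv.Perm.mem_cycleFactorsFinset_iff.mp hc
    obtain ⟨x, hx, -⟩ := hcyc
    have hxc : x ∈ c.support := Equiv.Perm.mem_support.mpr hx
    have hceq : c = p.cycleOf x := Equiv.Perm.cycle_is_cycleOf hxc hc
    have hxp : x ∈ p.support := by
      rw [Equiv.Perm.mem_support, ← hsupp x hxc]
      exact hx
    refine Finset.mem_image.mpr ⟨x, ?_, ?_⟩
    · rw [← support_eq]; exact hxp
    · rw [hceq, support_cycleOf_eq' p hxp]
  · intro hs
    obtain ⟨x, hxmem, rfl⟩ := Finset.mem_image.mp hs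
    have hxp : x ∈ p.support := by rw [support_eq]; exact hxmem
    refine Finset.mem_image.mpr ⟨p.cycleOf x, ?_, ?_⟩
    · exact Equiv.Perm.cycleOf_mem_cycleFactorsFinset_iff.mpr hxp
    · exact support_cycleOf_eq' p hxp

lemma injOn_support (p : Equiv.Perm (Fin n)) :
    Set.InjOn Equiv.Perm.support (p.cycleFactorsFinset : Set (Equiv.Perm (Fin n))) := by
  intro c hc c' hc' h
  have hc2 := Equiv.Perm.mem_cycleFactorsFinset_iff.mp hc
  obtain ⟨x, hx, -⟩ := hc2.1
  have hxc : x ∈ c.support := Equiv.Perm.mem_support.mpr hx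
  have hxc' : x ∈ c'.support := by rw [← h]; exact hxc
  rw [Equiv.Perm.cycle_is_cycleOf hxc hc, Equiv.Perm.cycle_is_cycleOf hxc' hc']

lemma cycleType_eq_map (p : Equiv.Perm (Fin n)) :
    p.cycleType = (blocksOf (pSet p)).1.map Finset.card := by
  have h1 : (p.cycleFactorsFinset.image Equiv.Perm.support).1
      = p.cycleFactorsFinset.1.map Equiv.Perm.support :=
    Finset.image_val_of_injOn (injOn_support p)
  calc p.cycleType
      = (p.cycleFactorsFinset.1.map Equiv.Perm.support).map Finset.card := by
        rw [Equiv.Perm.cycleType_def, Multiset.map_map]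
    _ = (p.cycleFactorsFinset.image Equiv.Perm.support).1.map Finset.card := by rw [h1]
    _ = (blocksOf (pSet p)).1.map Finset.card := by rw [image_support_factors p]

lemma sgn_eq_of_pSet_eq {p q : Equiv.Perm (Fin n)} (h : pSet p = pSet q) : sgn p = sgn q := by
  have hct : p.cycleType = q.cycleType := by
    rw [cycleType_eq_map, cycleType_eq_map, h]
  simp [sgn, Equiv.Perm.sign_of_cycleType, hct]

lemma gfun_ne_zero (u : Setoid (Fin n)) : gfun u ≠ 0 := by
  have hconst : ∀ p : Equiv.Perm (Fin n), pSet p = u → sgn p = sgn (cyclicPerm u) :=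
    fun p hp => sgn_eq_of_pSet_eq (hp.trans (pSet_cyclicPerm u).symm)
  have hval : gfun u
      = ((Finset.univ.filter fun p : Equiv.Perm (Fin n) => pSet p = u).card : ℚ)
          * sgn (cyclicPerm u) := by
    rw [gfun, ← Finset.sum_filter,
      Finset.sum_congr rfl (fun p hp => hconst p (Finset.mem_filter.mp hp).2),
      Finset.sum_const, nsmul_eq_mul]
  rw [hval]
  have hcard : 0 < (Finset.univ.filter fun p : Equiv.Perm (Fin n) => pSet p = u).card :=
    Finset.card_pos.mpr ⟨cyclicPerm u, by simp [pSet_cyclicPerm]⟩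
  exact mul_ne_zero (Nat.cast_ne_zero.mpr hcard.ne') (sgn_ne_zero _)

lemma mu_bot_ne_zero (u : Setoid (Fin n)) : muS ⊥ u ≠ 0 := by
  rw [← gfun_eq_mu]; exact gfun_ne_zero u

end UpProof
namespace UpProof
variable {n : ℕ}

lemma inf_eq_bot_iff' {r s : Setoid (Fin n)} :
    r ⊓ s = ⊥ ↔ ∀ i j, r i j → s i j → i = j := by
  constructor
  · intro h i j hr hs
    have : (r ⊓ s) i j := Setoid.inf_iff_and.mpr ⟨hr, hs⟩
    rw [h] at this
    exact bot_iff.mp this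
  · intro h
    refine le_antisymm (setoid_le_iff.mpr fun x y hxy => ?_) bot_le
    have := Setoid.inf_iff_and.mp hxy
    exact bot_iff.mpr (h x y this.1 this.2)

lemma exists_ker (σ : Setoid (Fin n)) : ∃ w : Fin n → ℕ, Setoid.ker w = σ := by
  refine ⟨fun i => ((Finset.univ.filter fun j => σ i j).min'
    ⟨i, by simp only [Finset.mem_filter, Finset.mem_univ, true_and]; exact σ.refl i⟩ : Fin n), ?_⟩
  ext x y
  rw [Setoid.ker_def]
  constructor
  · intro h
    have h' := Fin.val_injective h
    have hx := Finset.min'_mem (Finset.univ.filter fun j => σ x j)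
      ⟨x, by simp only [Finset.mem_filter, Finset.mem_univ, true_and]; exact σ.refl x⟩
    have hy := Finset.min'_mem (Finset.univ.filter fun j => σ y j)
      ⟨y, by simp only [Finset.mem_filter, Finset.mem_univ, true_and]; exact σ.refl y⟩
    simp only [Finset.mem_filter, Finset.mem_univ, true_and] at hx hy
    rw [h'] at hx
    exact σ.trans hx (σ.symm hy)
  · intro h
    have : (Finset.univ.filter fun j => σ x j) = Finset.univ.filter fun j => σ y j := by
      ext z
      simp only [Finset.mem_filter, Finset.mem_univ, true_and]
      exact ⟨fun hz => σ.trans (σ.symm h) hz, fun hz => σ.trans h hz⟩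
    simp only [this]

lemma eFun_apply (τ : Setoid (Fin n)) (w : Fin n → ℕ) :
    eFun τ w = if τ ⊓ Setoid.ker w = ⊥ then 1 else 0 := by
  rw [eFun]
  refine if_congr ?_ rfl rfl
  rw [inf_eq_bot_iff']
  constructor
  · intro h i j hτ hker
    by_contra hne
    exact h i j hne hτ (Setoid.ker_def.mp hker)
  · intro h i j hne hτ hw
    exact hne (h i j hτ (Setoid.ker_def.mpr hw))

lemma sum_smul_eFun_apply (a : Setoid (Fin n) → ℚ) (w : Fin n → ℕ) :
    (∑ τ : Setoid (Fin n), a τ • eFun τ) w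
      = ∑ τ : Setoid (Fin n), if τ ⊓ Setoid.ker w = ⊥ then a τ else 0 := by
  rw [Finset.sum_apply]
  refine Finset.sum_congr rfl fun τ _ => ?_
  rw [Pi.smul_apply, eFun_apply, smul_eq_mul]
  by_cases h : τ ⊓ Setoid.ker w = ⊥ <;> simp [h]

lemma eval_to_mu (a : Setoid (Fin n) → ℚ) (σ : Setoid (Fin n)) :
    (∑ τ : Setoid (Fin n), if τ ⊓ σ = ⊥ then a τ else 0)
      = ∑ u : Setoid (Fin n), if u ≤ σ then
          muS ⊥ u * (∑ τ : Setoid (Fin n), if u ≤ τ then a τ else 0) else 0 := by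
  symm
  calc (∑ u : Setoid (Fin n), if u ≤ σ then
          muS ⊥ u * (∑ τ : Setoid (Fin n), if u ≤ τ then a τ else 0) else 0)
      = ∑ u : Setoid (Fin n), ∑ τ : Setoid (Fin n),
          if u ≤ σ ∧ u ≤ τ then muS ⊥ u * a τ else 0 := by
        refine Finset.sum_congr rfl fun u _ => ?_
        by_cases hu : u ≤ σ
        · rw [if_pos hu, Finset.mul_sum]
          refine Finset.sum_congr rfl fun τ _ => ?_
          by_cases ht : u ≤ τ
          · rw [if_pos ht, if_pos ⟨hu, ht⟩]
          · rw [if_neg ht, if_neg (fun hh => ht hh.2), mul_zero]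
        · rw [if_neg hu, Finset.sum_eq_zero]
          intro τ _
          rw [if_neg (fun hh => hu hh.1)]
    _ = ∑ τ : Setoid (Fin n), ∑ u : Setoid (Fin n),
          if u ≤ σ ∧ u ≤ τ then muS ⊥ u * a τ else 0 := Finset.sum_comm
    _ = ∑ τ : Setoid (Fin n), if τ ⊓ σ = ⊥ then a τ else 0 := by
        refine Finset.sum_congr rfl fun τ _ => ?_
        calc (∑ u : Setoid (Fin n), if u ≤ σ ∧ u ≤ τ then muS ⊥ u * a τ else 0)
            = ∑ u : Setoid (Fin n), (if u ≤ τ ⊓ σ then muS ⊥ u else 0) * a τ := by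
              refine Finset.sum_congr rfl fun u _ => ?_
              have hiff : (u ≤ σ ∧ u ≤ τ) ↔ u ≤ τ ⊓ σ := by
                rw [le_inf_iff, and_comm]
              by_cases h : u ≤ τ ⊓ σ
              · rw [if_pos (hiff.mpr h), if_pos h]
              · rw [if_neg (fun hh => h (hiff.mp hh)), if_neg h, zero_mul]
          _ = (∑ u : Setoid (Fin n), if u ≤ τ ⊓ σ then muS ⊥ u else 0) * a τ :=
              (Finset.sum_mul _ _ _).symm
          _ = (if τ ⊓ σ = ⊥ then 1 else 0) * a τ := by rw [sum_mu_le]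
          _ = if τ ⊓ σ = ⊥ then a τ else 0 := by
              by_cases h : τ ⊓ σ = ⊥ <;> simp [h]

/-- Linear independence of the noncommutative elementary functions. -/
lemma eFun_indep (a : Setoid (Fin n) → ℚ)
    (h : ∀ σ : Setoid (Fin n), (∑ τ : Setoid (Fin n), if τ ⊓ σ = ⊥ then a τ else 0) = 0) :
    ∀ τ, a τ = 0 := by
  set A : Setoid (Fin n) → ℚ := fun u => ∑ τ : Setoid (Fin n), if u ≤ τ then a τ else 0 with hA
  have h1 : ∀ σ : Setoid (Fin n),
      (∑ u : Setoid (Fin n), if u ≤ σ then muS ⊥ u * A u else 0) = 0 := by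
    intro σ
    rw [← eval_to_mu]
    exact h σ
  have h2 : ∀ u : Setoid (Fin n), muS ⊥ u * A u = 0 := by
    intro u
    induction u using WellFoundedLT.induction with
    | ind u IH =>
      have := h1 u
      rw [sum_le_split] at this
      rw [Finset.sum_eq_zero (fun σ _ => by
        by_cases hσ : σ < u
        · rw [if_pos hσ, IH σ hσ]
        · rw [if_neg hσ])] at this
      linarith
  have h3 : ∀ u, A u = 0 := by
    intro u
    rcases mul_eq_zero.mp (h2 u) with h | h
    · exact absurd h (mu_bot_ne_zero u)
    · exact h
  -- downward induction
  intro τ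
  induction τ using WellFoundedGT.induction with
  | ind τ IH =>
    have hsplit : A τ = a τ + ∑ σ : Setoid (Fin n), if τ < σ then a σ else 0 := by
      have hrfl : A τ = ∑ σ : Setoid (Fin n), if τ ≤ σ then a σ else 0 := rfl
      rw [hrfl]
      have key : ∀ σ : Setoid (Fin n), (if τ ≤ σ then a σ else 0)
          = (if σ = τ then a σ else 0) + (if τ < σ then a σ else 0) := by
        intro σ
        rcases eq_or_ne σ τ with rfl | hne
        · simp [le_refl, lt_irrefl]
        · by_cases hle : τ ≤ σ
          · rw [if_pos hle, if_neg hne, if_pos (lt_of_le_of_ne hle (Ne.symm hne)), zero_add]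
          · rw [if_neg hle, if_neg hne, if_neg (fun hh => hle hh.le), zero_add]
      rw [Finset.sum_congr rfl fun σ _ => key σ, Finset.sum_add_distrib,
        Finset.sum_ite_eq' Finset.univ τ a, if_pos (Finset.mem_univ τ)]
    have hrest : (∑ σ : Setoid (Fin n), if τ < σ then a σ else 0) = 0 :=
      Finset.sum_eq_zero fun σ _ => by
        by_cases hσ : τ < σ
        · rw [if_pos hσ, IH σ hσ]
        · rw [if_neg hσ]
    have := h3 τ
    rw [hsplit, hrest] at this
    linarith

/-- Uniqueness of `e`-expansions. -/
lemma eFun_coeffs_unique (a b : Setoid (Fin n) → ℚ)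
    (h : (∑ τ : Setoid (Fin n), a τ • eFun τ) = ∑ τ : Setoid (Fin n), b τ • eFun τ) :
    a = b := by
  have key : ∀ σ : Setoid (Fin n),
      (∑ τ : Setoid (Fin n), if τ ⊓ σ = ⊥ then a τ - b τ else 0) = 0 := by
    intro σ
    obtain ⟨w, hw⟩ := exists_ker σ
    have := congrFun h w
    rw [sum_smul_eFun_apply, sum_smul_eFun_apply, hw] at this
    have hsub : (∑ τ : Setoid (Fin n), if τ ⊓ σ = ⊥ then a τ - b τ else 0)
        = (∑ τ : Setoid (Fin n), if τ ⊓ σ = ⊥ then a τ else 0)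
          - ∑ τ : Setoid (Fin n), if τ ⊓ σ = ⊥ then b τ else 0 := by
      rw [← Finset.sum_sub_distrib]
      refine Finset.sum_congr rfl fun τ _ => ?_
      by_cases hh : τ ⊓ σ = ⊥ <;> simp [hh]
    rw [hsub, this, sub_self]
  have hz := eFun_indep (fun τ => a τ - b τ) key
  funext τ
  have h2 : a τ - b τ = 0 := hz τ
  linarith

end UpProof
namespace UpProof
variable {n : ℕ}

/-- Extension by zero of a coefficient family on the downset of `ρ`. -/
noncomputable def extZ (ρ : Setoid (Fin n)) (b : {τ : Setoid (Fin n) // τ ≤ ρ} → ℚ) :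
    Setoid (Fin n) → ℚ :=
  fun τ => if h : τ ≤ ρ then b ⟨τ, h⟩ else 0

/-- The restricted evaluation matrix as a linear endomorphism. -/
noncomputable def Tmap (ρ : Setoid (Fin n)) :
    ({τ : Setoid (Fin n) // τ ≤ ρ} → ℚ) →ₗ[ℚ] ({τ : Setoid (Fin n) // τ ≤ ρ} → ℚ) where
  toFun b := fun σ => ∑ τ : {τ : Setoid (Fin n) // τ ≤ ρ},
    if τ.1 ⊓ σ.1 = ⊥ then b τ else 0
  map_add' b c := by
    funext σ
    rw [Pi.add_apply, ← Finset.sum_add_distrib]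
    refine Finset.sum_congr rfl fun τ _ => ?_
    by_cases h : τ.1 ⊓ σ.1 = ⊥ <;> simp [h]
  map_smul' q b := by
    funext σ
    rw [RingHom.id_apply, Pi.smul_apply, smul_eq_mul, Finset.mul_sum]
    refine Finset.sum_congr rfl fun τ _ => ?_
    by_cases h : τ.1 ⊓ σ.1 = ⊥ <;> simp [h]

lemma eval_extZ (ρ : Setoid (Fin n)) (b : {τ : Setoid (Fin n) // τ ≤ ρ} → ℚ)
    (σ : Setoid (Fin n)) :
    (∑ τ : Setoid (Fin n), if τ ⊓ σ = ⊥ then extZ ρ b τ else 0)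
      = Tmap ρ b ⟨σ ⊓ ρ, inf_le_right⟩ := by
  have hzero : ∀ τ : Setoid (Fin n), ¬ τ ≤ ρ → (if τ ⊓ σ = ⊥ then extZ ρ b τ else 0) = 0 := by
    intro τ hτ
    rw [extZ, dif_neg hτ]
    simp
  have h1 : (∑ τ : Setoid (Fin n), if τ ⊓ σ = ⊥ then extZ ρ b τ else 0)
      = ∑ τ ∈ Finset.univ.filter (fun τ : Setoid (Fin n) => τ ≤ ρ),
          (if τ ⊓ σ = ⊥ then extZ ρ b τ else 0) := by
    symm
    refine Finset.sum_subset (Finset.filter_subset _ _) fun τ _ hτ => ?_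
    refine hzero τ fun hh => hτ ?_
    simp only [Finset.mem_filter, Finset.mem_univ, true_and]
    exact hh
  rw [h1, Finset.sum_subtype (p := fun τ : Setoid (Fin n) => τ ≤ ρ)
    (Finset.univ.filter fun τ : Setoid (Fin n) => τ ≤ ρ)
    (fun τ => by simp only [Finset.mem_filter, Finset.mem_univ, true_and])
    (fun τ : Setoid (Fin n) => if τ ⊓ σ = ⊥ then extZ ρ b τ else 0)]
  show _ = ∑ τ : {τ : Setoid (Fin n) // τ ≤ ρ}, if τ.1 ⊓ (σ ⊓ ρ) = ⊥ then b τ else 0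
  refine Finset.sum_congr rfl fun τ _ => ?_
  have hcond : τ.1 ⊓ σ = τ.1 ⊓ (σ ⊓ ρ) := by
    rw [show τ.1 ⊓ (σ ⊓ ρ) = τ.1 ⊓ ρ ⊓ σ from by
      rw [inf_assoc, inf_comm σ ρ, ← inf_assoc], inf_eq_left.mpr τ.2]
  rw [← hcond, extZ, dif_pos τ.2]

lemma Tmap_injective (ρ : Setoid (Fin n)) : Function.Injective (Tmap ρ) := by
  rw [injective_iff_map_eq_zero]
  intro b hb
  have key : ∀ σ : Setoid (Fin n),
      (∑ τ : Setoid (Fin n), if τ ⊓ σ = ⊥ then extZ ρ b τ else 0) = 0 := by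
    intro σ
    rw [eval_extZ]
    rw [hb]
    rfl
  have := eFun_indep (extZ ρ b) key
  funext τ
  have h2 := this τ.1
  rw [extZ, dif_pos τ.2] at h2
  exact h2

/-- The span lemma: a function of `ker w ⊓ ρ` is an `e`-combination supported below `ρ`. -/
lemma span_downset (ρ : Setoid (Fin n)) (φ : Setoid (Fin n) → ℚ) :
    ∃ a : Setoid (Fin n) → ℚ, (∀ τ, ¬ τ ≤ ρ → a τ = 0) ∧
      ∀ w : Fin n → ℕ, (∑ τ : Setoid (Fin n), a τ • eFun τ) w = φ (Setoid.ker w ⊓ ρ) := by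
  have hsurj : Function.Surjective (Tmap ρ) :=
    (LinearMap.injective_iff_surjective).mp (Tmap_injective ρ)
  obtain ⟨b, hb⟩ := hsurj (fun σ => φ σ.1)
  refine ⟨extZ ρ b, fun τ hτ => by rw [extZ, dif_neg hτ], fun w => ?_⟩
  rw [sum_smul_eFun_apply, eval_extZ, hb]

end UpProof
namespace UpProof
open Finset

section Swap
variable {m : ℕ}

lemma setoid_swap_rel (u : Setoid (Fin m)) {a b : Fin m} (hab : u a b) (x : Fin m) :
    u (Equiv.swap a b x) x := by
  rcases eq_or_ne x a with rfl | hxa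
  · rw [Equiv.swap_apply_left]; exact u.symm hab
  rcases eq_or_ne x b with rfl | hxb
  · rw [Equiv.swap_apply_right]; exact hab
  · rw [Equiv.swap_apply_of_ne_of_ne hxa hxb]

lemma setoid_swap_iff (u : Setoid (Fin m)) {a b : Fin m} (hab : u a b) {x y : Fin m} :
    u (Equiv.swap a b x) (Equiv.swap a b y) ↔ u x y := by
  constructor
  · intro h
    exact u.trans (u.symm (setoid_swap_rel u hab x)) (u.trans h (setoid_swap_rel u hab y))
  · intro h
    exact u.trans (setoid_swap_rel u hab x) (u.trans h (u.symm (setoid_swap_rel u hab y)))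

/-- Pullback of a setoid along a permutation. -/
def permApply (s : Equiv.Perm (Fin m)) (τ : Setoid (Fin m)) : Setoid (Fin m) :=
  ⟨fun x y => τ (s x) (s y),
    ⟨fun x => τ.refl _, fun h => τ.symm h, fun h h' => τ.trans h h'⟩⟩

lemma permApply_apply {s : Equiv.Perm (Fin m)} {τ : Setoid (Fin m)} {x y : Fin m} :
    permApply s τ x y ↔ τ (s x) (s y) := Iff.rfl

lemma permApply_invol {s : Equiv.Perm (Fin m)} (hs : ∀ x, s (s x) = x) (τ : Setoid (Fin m)) :
    permApply s (permApply s τ) = τ := by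
  ext x y
  rw [permApply_apply, permApply_apply, hs, hs]

lemma permApply_bijective {s : Equiv.Perm (Fin m)} (hs : ∀ x, s (s x) = x) :
    Function.Bijective (permApply s) :=
  Function.bijective_iff_has_inverse.mpr
    ⟨permApply s, fun τ => permApply_invol hs τ, fun τ => permApply_invol hs τ⟩

lemma eFun_comp (s : Equiv.Perm (Fin m)) (τ : Setoid (Fin m)) (w : Fin m → ℕ) :
    eFun τ (fun i => w (s i)) = eFun (permApply s⁻¹ τ) w := by
  rw [eFun, eFun]
  refine if_congr ?_ rfl rfl
  constructor
  · intro H x y hne hτ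
    have := H (s⁻¹ x) (s⁻¹ y) (fun hh => hne (by rw [← perm_apply_inv_self' s x,
      ← perm_apply_inv_self' s y, hh])) hτ
    rwa [perm_apply_inv_self', perm_apply_inv_self'] at this
  · intro H i j hne hτ
    refine H (s i) (s j) (fun hh => hne (s.injective hh)) ?_
    rw [permApply_apply, perm_inv_apply_self', perm_inv_apply_self']
    exact hτ

end Swap

section Specific
variable {d : ℕ} (π : Setoid (Fin (d + 1)))

/-- the next-to-last vertex, as an element of `Fin (d+2)` -/
def Dv : Fin (d + 2) := ⟨d, by omega⟩
/-- the last vertex of `Fin (d+2)` -/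
def Lv : Fin (d + 2) := Fin.last (d + 1)

lemma Dv_ne_Lv : (Dv : Fin (d + 2)) ≠ Lv := by
  simp [Dv, Lv, Fin.ext_iff]

lemma extendB_r {m : ℕ} {π' : Setoid (Fin (d + 1))} {Q : ℕ → Prop} {x y : Fin (d + 1 + m)} :
    extendB m π' Q x y ↔ (x = y ∨
    (∃ (hx : (x : ℕ) < d + 1) (hy : (y : ℕ) < d + 1), π' ⟨x, hx⟩ ⟨y, hy⟩) ∨
    (((∃ hx : (x : ℕ) < d + 1, π' ⟨x, hx⟩ (Fin.last d)) ∨ (d + 1 ≤ (x : ℕ) ∧ Q (x : ℕ))) ∧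
     ((∃ hy : (y : ℕ) < d + 1, π' ⟨y, hy⟩ (Fin.last d)) ∨ (d + 1 ≤ (y : ℕ) ∧ Q (y : ℕ))))) :=
  Iff.rfl

lemma addSingleton_iff {x y : Fin (d + 2)} : addSingleton π x y ↔
    (x = y ∨ ∃ (hx : (x : ℕ) < d + 1) (hy : (y : ℕ) < d + 1), π ⟨x, hx⟩ ⟨y, hy⟩) := by
  constructor
  · intro h
    rcases (extendB_r (m := 1)).mp h with h | h | ⟨h1, h2⟩
    · exact Or.inl h
    · exact Or.inr h
    · rcases h1 with ⟨hx, hπx⟩ | ⟨-, hF⟩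
      · rcases h2 with ⟨hy, hπy⟩ | ⟨-, hF⟩
        · exact Or.inr ⟨hx, hy, π.trans hπx (π.symm hπy)⟩
        · exact absurd hF not_false
      · exact absurd hF not_false
  · intro h
    rcases h with h | h
    · exact (extendB_r (m := 1)).mpr (Or.inl h)
    · exact (extendB_r (m := 1)).mpr (Or.inr (Or.inl h))

lemma addSingleton_le_addLast : addSingleton π ≤ addLast π := by
  refine setoid_le_iff.mpr fun x y h => ?_
  rcases (addSingleton_iff π).mp h with h | h
  · exact (extendB_r (m := 1)).mpr (Or.inl h)
  · exact (extendB_r (m := 1)).mpr (Or.inr (Or.inl h))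

lemma addLast_rel_LD : addLast π Lv Dv := by
  refine (extendB_r (m := 1)).mpr (Or.inr (Or.inr ⟨Or.inr ⟨by simp [Lv, Fin.last], trivial⟩,
    Or.inl ⟨by simp [Dv], ?_⟩⟩))
  exact π.refl (Fin.last d)

/-- the block of the old last vertex, inside `Fin (d+2)` -/
noncomputable def Jset : Finset (Fin (d + 2)) :=
  Finset.univ.filter fun j => addSingleton π j Dv

lemma mem_J_iff {x : Fin (d + 2)} :
    x ∈ Jset π ↔ ∃ hx : (x : ℕ) < d + 1, π ⟨x, hx⟩ (Fin.last d) := by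
  rw [Jset, Finset.mem_filter]
  simp only [Finset.mem_univ, true_and]
  constructor
  · intro h
    rcases (addSingleton_iff π).mp h with rfl | ⟨hx, hy, hπ⟩
    · exact ⟨by simp [Dv], π.refl (Fin.last d)⟩
    · exact ⟨hx, hπ⟩
  · rintro ⟨hx, hπ⟩
    exact (addSingleton_iff π).mpr (Or.inr ⟨hx, by simp [Dv], hπ⟩)

lemma J_lt {x : Fin (d + 2)} (h : x ∈ Jset π) : (x : ℕ) < d + 1 :=
  ((mem_J_iff π).mp h).1

lemma J_ne_Lv {x : Fin (d + 2)} (h : x ∈ Jset π) : x ≠ Lv := by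
  have := J_lt π h
  intro hh
  rw [hh] at this
  simp [Lv, Fin.last] at this

lemma J_rel_D {x : Fin (d + 2)} (h : x ∈ Jset π) : addSingleton π x Dv := by
  rw [Jset, Finset.mem_filter] at h
  exact h.2

lemma J_rel_L {x : Fin (d + 2)} (h : x ∈ Jset π) : addLast π x Lv :=
  (addLast π).trans (Setoid.le_def.mp (addSingleton_le_addLast π) (J_rel_D π h))
    ((addLast π).symm (addLast_rel_LD π))

lemma J_pairwise {x y : Fin (d + 2)} (hx : x ∈ Jset π) (hy : y ∈ Jset π) :
    addSingleton π x y :=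
  (addSingleton π).trans (J_rel_D π hx) ((addSingleton π).symm (J_rel_D π hy))

lemma Dv_mem_J : (Dv : Fin (d + 2)) ∈ Jset π := by
  rw [Jset, Finset.mem_filter]
  exact ⟨Finset.mem_univ _, (addSingleton π).refl _⟩

lemma J_card : (Jset π).card = blockCard π (Fin.last d) := by
  have himg : Jset π
      = (Finset.univ.filter fun j : Fin (d + 1) => π (Fin.last d) j).image Fin.castSucc := by
    ext x
    rw [mem_J_iff]
    constructor
    · rintro ⟨hx, hπ⟩
      refine Finset.mem_image.mpr ⟨⟨(x : ℕ), hx⟩, ?_, ?_⟩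
      · simp only [Finset.mem_filter, Finset.mem_univ, true_and]
        exact π.symm hπ
      · exact Fin.ext rfl
    · intro hx
      obtain ⟨j, hj, rfl⟩ := Finset.mem_image.mp hx
      simp only [Finset.mem_filter, Finset.mem_univ, true_and] at hj
      refine ⟨by simpa using Fin.is_le j, ?_⟩
      have : (⟨((j.castSucc : Fin (d+2)) : ℕ), by simpa using Fin.is_le j⟩ : Fin (d+1)) = j :=
        Fin.ext (by simp)
      rw [this]
      exact π.symm hj
  rw [himg, Finset.card_image_of_injective _ (Fin.castSucc_injective (d + 1)), blockCard]

lemma eFun_addSingleton (w : Fin (d + 2) → ℕ) :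
    eFun (addSingleton π) w = eFun π (fun i => w i.castSucc) := by
  rw [eFun, eFun]
  refine if_congr ?_ rfl rfl
  constructor
  · intro H i j hne hπ
    refine H i.castSucc j.castSucc (fun hh => hne (Fin.castSucc_injective _ hh)) ?_
    refine (addSingleton_iff π).mpr (Or.inr ⟨by simpa using Fin.is_le i, by simpa using Fin.is_le j, ?_⟩)
    have hi : (⟨((i.castSucc : Fin (d+2)) : ℕ), by simpa using Fin.is_le i⟩ : Fin (d+1)) = i := Fin.ext (by simp)
    have hj : (⟨((j.castSucc : Fin (d+2)) : ℕ), by simpa using Fin.is_le j⟩ : Fin (d+1)) = j := Fin.ext (by simp)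
    rw [hi, hj]
    exact hπ
  · intro H x y hne hπ
    rcases (addSingleton_iff π).mp hπ with rfl | ⟨hx, hy, hπ'⟩
    · exact absurd rfl hne
    · have hx' : (⟨(x : ℕ), hx⟩ : Fin (d + 1)).castSucc = x := Fin.ext rfl
      have hy' : (⟨(y : ℕ), hy⟩ : Fin (d + 1)).castSucc = y := Fin.ext rfl
      have := H ⟨(x : ℕ), hx⟩ ⟨(y : ℕ), hy⟩
        (fun hh => hne (by rw [← hx', ← hy', hh])) hπ'
      rwa [hx', hy'] at this
end Specific
end UpProof
namespace UpProof
open Finset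
section Specific2
variable {d : ℕ} (π : Setoid (Fin (d + 1)))

noncomputable def gg (j : Fin (d + 2)) : NCF (d + 2) :=
  fun w => if w Lv = w j then eFun (addSingleton π) w else 0

lemma up_eq_ggD : up (eFun π) = gg π Dv := by
  funext w
  simp only [gg]
  rw [eFun_addSingleton]
  rfl

lemma sum_gg (w : Fin (d + 2) → ℕ) :
    (∑ j ∈ Jset π, gg π j w) = eFun (addSingleton π) w - eFun (addLast π) w := by
  by_cases hP : ∀ x y : Fin (d + 2), x ≠ y → addSingleton π x y → w x ≠ w y
  · have he0 : eFun (addSingleton π) w = 1 := if_pos hP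
    have hsum : (∑ j ∈ Jset π, gg π j w)
        = (((Jset π).filter fun j => w Lv = w j).card : ℚ) := by
      calc (∑ j ∈ Jset π, gg π j w)
          = ∑ j ∈ Jset π, if w Lv = w j then (1 : ℚ) else 0 := by
            refine Finset.sum_congr rfl fun j hj => ?_
            simp only [gg, he0]
        _ = ∑ _j ∈ ((Jset π).filter fun j => w Lv = w j), (1 : ℚ) :=
            (Finset.sum_filter _ _).symm
        _ = _ := by rw [Finset.sum_const, nsmul_eq_mul, mul_one]
    by_cases hR : ∀ x y : Fin (d + 2), x ≠ y → addLast π x y → w x ≠ w y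
    · have hfilter : ((Jset π).filter fun j => w Lv = w j) = ∅ := by
        refine Finset.filter_eq_empty_iff.mpr fun j hj => ?_
        exact hR Lv j (Ne.symm (J_ne_Lv π hj)) ((addLast π).symm (J_rel_L π hj))
      have heρ : eFun (addLast π) w = 1 := if_pos hR
      rw [hsum, hfilter, he0, heρ]
      simp
    · push_neg at hR
      obtain ⟨x, y, hxy, hrxy, hw⟩ := hR
      have hkey : ∃ j₀ ∈ Jset π, w j₀ = w Lv := by
        rcases (extendB_r (m := 1)).mp hrxy with heq | hmid | ⟨h1, h2⟩
        · exact absurd heq hxy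
        · exact absurd hw (hP x y hxy ((addSingleton_iff π).mpr (Or.inr hmid)))
        · have hx' : x ∈ Jset π ∨ x = Lv := by
            rcases h1 with ⟨hx, hπx⟩ | ⟨hge, -⟩
            · exact Or.inl ((mem_J_iff π).mpr ⟨hx, hπx⟩)
            · right
              apply Fin.ext
              have := x.isLt
              simp only [Lv, Fin.last]
              omega
          have hy' : y ∈ Jset π ∨ y = Lv := by
            rcases h2 with ⟨hy, hπy⟩ | ⟨hge, -⟩
            · exact Or.inl ((mem_J_iff π).mpr ⟨hy, hπy⟩)
            · right
              apply Fin.ext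
              have := y.isLt
              simp only [Lv, Fin.last]
              omega
          rcases hx' with hxJ | hxL
          · rcases hy' with hyJ | hyL
            · exact absurd hw (hP x y hxy (J_pairwise π hxJ hyJ))
            · exact ⟨x, hxJ, by rw [← hyL]; exact hw⟩
          · rcases hy' with hyJ | hyL
            · exact ⟨y, hyJ, by rw [← hxL]; exact hw.symm⟩
            · exact absurd (hxL.trans hyL.symm) hxy
      obtain ⟨j₀, hj₀, hwj₀⟩ := hkey
      have hfilter : ((Jset π).filter fun j => w Lv = w j) = {j₀} := by
        ext j
        simp only [Finset.mem_filter, Finset.mem_singleton]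
        constructor
        · rintro ⟨hjJ, hwj⟩
          by_contra hne
          exact hP j j₀ hne (J_pairwise π hjJ hj₀) (by rw [← hwj, hwj₀])
        · rintro rfl
          exact ⟨hj₀, hwj₀.symm⟩
      have hR' : ¬ ∀ x y : Fin (d + 2), x ≠ y → addLast π x y → w x ≠ w y := by
        push_neg
        exact ⟨x, y, hxy, hrxy, hw⟩
      have heρ : eFun (addLast π) w = 0 := if_neg hR'
      rw [hsum, hfilter, he0, heρ]
      simp
  · have he0 : eFun (addSingleton π) w = 0 := if_neg hP
    have heρ : eFun (addLast π) w = 0 := by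
      refine if_neg fun hR => ?_
      exact hP fun x y hne hxy =>
        hR x y hne (Setoid.le_def.mp (addSingleton_le_addLast π) hxy)
    rw [he0, heρ, sub_zero]
    refine Finset.sum_eq_zero fun j hj => ?_
    simp [gg, he0]

lemma gg_phi (j : Fin (d + 2)) (hj : j ∈ Jset π) (w : Fin (d + 2) → ℕ) :
    gg π j w = if ((Setoid.ker w ⊓ addLast π) Lv j
        ∧ addSingleton π ⊓ (Setoid.ker w ⊓ addLast π) = ⊥) then (1 : ℚ) else 0 := by
  have hflat : gg π j w
      = if (w Lv = w j ∧ addSingleton π ⊓ Setoid.ker w = ⊥) then (1 : ℚ) else 0 := by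
    simp only [gg]
    rw [eFun_apply]
    by_cases h : w Lv = w j <;> simp [h]
  rw [hflat]
  refine if_congr (and_congr ?_ ?_) rfl rfl
  · rw [Setoid.inf_iff_and]
    constructor
    · intro h
      exact ⟨Setoid.ker_def.mpr h, (addLast π).symm (J_rel_L π hj)⟩
    · intro h
      exact Setoid.ker_def.mp h.1
  · rw [inf_comm (Setoid.ker w) (addLast π), ← inf_assoc,
      inf_eq_left.mpr (addSingleton_le_addLast π)]

lemma gg_expansion (j : Fin (d + 2)) (hj : j ∈ Jset π) :
    ∃ a : Setoid (Fin (d + 2)) → ℚ, (∀ τ, ¬ τ ≤ addLast π → a τ = 0) ∧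
      gg π j = ∑ τ : Setoid (Fin (d + 2)), a τ • eFun τ := by
  obtain ⟨a, ha1, ha2⟩ := span_downset (addLast π)
    (fun σ => if (σ Lv j ∧ addSingleton π ⊓ σ = ⊥) then (1 : ℚ) else 0)
  refine ⟨a, ha1, funext fun w => ?_⟩
  rw [gg_phi π j hj w]
  exact (ha2 w).symm

lemma permApply_swap_addSingleton {j : Fin (d + 2)} (hj : j ∈ Jset π) :
    permApply (Equiv.swap j Dv) (addSingleton π) = addSingleton π := by
  ext x y
  rw [permApply_apply]
  exact setoid_swap_iff (addSingleton π) (J_rel_D π hj)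

lemma permApply_swap_addLast {j : Fin (d + 2)} (hj : j ∈ Jset π) :
    permApply (Equiv.swap j Dv) (addLast π) = addLast π := by
  ext x y
  rw [permApply_apply]
  exact setoid_swap_iff (addLast π) (Setoid.le_def.mp (addSingleton_le_addLast π) (J_rel_D π hj))

lemma gg_swap (j : Fin (d + 2)) (hj : j ∈ Jset π) (w : Fin (d + 2) → ℕ) :
    gg π j w = gg π Dv (fun i => w (Equiv.swap j Dv i)) := by
  have hL : Equiv.swap j Dv Lv = Lv :=
    Equiv.swap_apply_of_ne_of_ne (Ne.symm (J_ne_Lv π hj)) (Ne.symm Dv_ne_Lv)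
  have hD : Equiv.swap j Dv Dv = j := Equiv.swap_apply_right j Dv
  show (if w Lv = w j then eFun (addSingleton π) w else 0)
      = if w (Equiv.swap j Dv Lv) = w (Equiv.swap j Dv Dv)
          then eFun (addSingleton π) (fun i => w (Equiv.swap j Dv i)) else 0
  rw [hL, hD, eFun_comp, Equiv.swap_inv, permApply_swap_addSingleton π hj]

lemma coeff_swap (j : Fin (d + 2)) (hj : j ∈ Jset π) (a : Setoid (Fin (d + 2)) → ℚ)
    (ha : gg π Dv = ∑ τ : Setoid (Fin (d + 2)), a τ • eFun τ) :
    gg π j = ∑ τ : Setoid (Fin (d + 2)),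
      (a (permApply (Equiv.swap j Dv) τ)) • eFun τ := by
  have hinv : ∀ x, Equiv.swap j Dv (Equiv.swap j Dv x) = x := fun x => Equiv.swap_apply_self _ _ _
  funext w
  rw [gg_swap π j hj w, ha, Finset.sum_apply, Finset.sum_apply]
  have hstep : ∀ τ : Setoid (Fin (d + 2)), (a τ • eFun τ) (fun i => w (Equiv.swap j Dv i))
      = a τ * eFun (permApply (Equiv.swap j Dv) τ) w := by
    intro τ
    rw [Pi.smul_apply, smul_eq_mul, eFun_comp, Equiv.swap_inv]
  rw [Finset.sum_congr rfl fun τ _ => hstep τ]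
  have hre := Function.Bijective.sum_comp (permApply_bijective hinv)
    (fun τ => a (permApply (Equiv.swap j Dv) τ) * eFun τ w)
  calc (∑ τ : Setoid (Fin (d + 2)), a τ * eFun (permApply (Equiv.swap j Dv) τ) w)
      = ∑ τ : Setoid (Fin (d + 2)),
          a (permApply (Equiv.swap j Dv) (permApply (Equiv.swap j Dv) τ))
            * eFun (permApply (Equiv.swap j Dv) τ) w := by
        refine Finset.sum_congr rfl fun τ _ => ?_
        rw [permApply_invol hinv]
    _ = ∑ τ : Setoid (Fin (d + 2)), a (permApply (Equiv.swap j Dv) τ) * eFun τ w := hre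
    _ = ∑ τ : Setoid (Fin (d + 2)), (a (permApply (Equiv.swap j Dv) τ) • eFun τ) w := by
        refine Finset.sum_congr rfl fun τ _ => ?_
        rw [Pi.smul_apply, smul_eq_mul]

end Specific2
end UpProof
namespace UpProof
open Finset

section Rigidity
variable {m : ℕ}

noncomputable def blk (u : Setoid (Fin m)) (x : Fin m) : Finset (Fin m) :=
  Finset.univ.filter fun y => u x y

lemma mem_blk {u : Setoid (Fin m)} {x y : Fin m} : y ∈ blk u x ↔ u x y := by
  rw [blk, Finset.mem_filter]
  simp

lemma blk_eq_of_rel {u : Setoid (Fin m)} {x y : Fin m} (h : u x y) : blk u x = blk u y := by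
  ext z
  rw [mem_blk, mem_blk]
  exact ⟨fun hz => u.trans (u.symm h) hz, fun hz => u.trans h hz⟩

lemma sizes_eq (u : Setoid (Fin m)) :
    sizes u = (Finset.univ.image (blk u)).val.map Finset.card := rfl

/-- Rigidity: a refinement with the same block sizes is equal. -/
lemma setoid_eq_of_le_of_sizes {τ τ' : Setoid (Fin m)} (hle : τ ≤ τ')
    (hs : sizes τ = sizes τ') : τ = τ' := by
  set h : Finset (Fin m) → Finset (Fin m) :=
    fun C => Finset.univ.filter fun z => ∃ x ∈ C, τ' x z with hh
  have hblk : ∀ x, h (blk τ x) = blk τ' x := by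
    intro x
    ext z
    rw [hh]
    simp only [Finset.mem_filter, Finset.mem_univ, true_and, mem_blk]
    constructor
    · rintro ⟨x', hx', hz⟩
      exact τ'.trans (Setoid.le_def.mp hle hx') hz
    · intro hz
      exact ⟨x, τ.refl x, hz⟩
  have hcard : (Finset.univ.image (blk τ)).card = (Finset.univ.image (blk τ')).card := by
    have := congrArg Multiset.card hs
    rw [sizes_eq, sizes_eq, Multiset.card_map, Multiset.card_map] at this
    exact this
  have hmaps : ∀ C ∈ Finset.univ.image (blk τ), h C ∈ Finset.univ.image (blk τ') := by
    intro C hC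
    obtain ⟨x, -, rfl⟩ := Finset.mem_image.mp hC
    rw [hblk]
    exact Finset.mem_image.mpr ⟨x, Finset.mem_univ x, rfl⟩
  have hsurj : ∀ D ∈ Finset.univ.image (blk τ'), ∃ C, ∃ hC : C ∈ Finset.univ.image (blk τ),
      h C = D := by
    intro D hD
    obtain ⟨x, -, rfl⟩ := Finset.mem_image.mp hD
    exact ⟨blk τ x, Finset.mem_image.mpr ⟨x, Finset.mem_univ x, rfl⟩, hblk x⟩
  have hinj := Finset.inj_on_of_surj_on_of_card_le (fun C _ => h C)
    (fun C hC => hmaps C hC) (fun D hD => hsurj D hD) (le_of_eq hcard)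
  refine le_antisymm hle (setoid_le_iff.mpr fun x y hxy => ?_)
  have h1 : h (blk τ x) = h (blk τ y) := by
    rw [hblk, hblk]
    exact blk_eq_of_rel hxy
  have h2 : blk τ x = blk τ y :=
    hinj (Finset.mem_image.mpr ⟨x, Finset.mem_univ x, rfl⟩)
      (Finset.mem_image.mpr ⟨y, Finset.mem_univ y, rfl⟩) h1
  have : y ∈ blk τ x := by
    rw [h2]
    exact mem_blk.mpr (τ.refl y)
  exact mem_blk.mp this

end Rigidity

section PsetFacts
variable {d : ℕ} {π : Setoid (Fin (d + 1))} {l : ℕ} {α : Fin l → ℕ}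

lemma Pset_blk {τ : Setoid (Fin (d + 2))} {B : Fin l → Finset (Fin (d + 2))}
    (hB : ∀ x y, τ x y ↔ ∃ i, x ∈ B i ∧ y ∈ B i)
    (hdisj : ∀ i j, i ≠ j → Disjoint (B i) (B j))
    {x : Fin (d + 2)} {i : Fin l} (hx : x ∈ B i) : blk τ x = B i := by
  ext y
  rw [mem_blk, hB]
  constructor
  · rintro ⟨i', hxi', hyi'⟩
    rcases eq_or_ne i' i with rfl | hne
    · exact hyi'
    · exact absurd (Finset.mem_inter.mpr ⟨hxi', hx⟩)
        (by rw [Finset.disjoint_iff_inter_eq_empty.mp (hdisj i' i hne)]; simp)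
  · intro hy
    exact ⟨i, hx, hy⟩

lemma Pset_sizes {τ : Setoid (Fin (d + 2))} (hτ : τ ∈ Pset π l α) (hpos : ∀ i, 0 < α i) :
    sizes τ = Multiset.map α Finset.univ.val := by
  obtain ⟨-, B, hB, hdisj, hcard, -⟩ := hτ
  have hcover : ∀ x : Fin (d + 2), ∃ i, x ∈ B i := by
    intro x
    obtain ⟨i, hx, -⟩ := (hB x x).mp (τ.refl x)
    exact ⟨i, hx⟩
  have hBne : ∀ i, (B i).Nonempty := fun i =>
    Finset.card_pos.mp (by rw [hcard i]; exact hpos i)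
  have hBinj : Function.Injective B := by
    intro i j hij
    by_contra hne
    obtain ⟨x, hx⟩ := hBne i
    exact absurd (Finset.mem_inter.mpr ⟨hx, (hij ▸ hx : x ∈ B j)⟩)
      (by rw [Finset.disjoint_iff_inter_eq_empty.mp (hdisj i j hne)]; simp)
  have himg : Finset.univ.image (blk τ) = Finset.univ.image B := by
    ext C
    constructor
    · intro hC
      obtain ⟨x, -, rfl⟩ := Finset.mem_image.mp hC
      obtain ⟨i, hi⟩ := hcover x
      rw [Pset_blk hB hdisj hi]
      exact Finset.mem_image.mpr ⟨i, Finset.mem_univ i, rfl⟩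
    · intro hC
      obtain ⟨i, -, rfl⟩ := Finset.mem_image.mp hC
      obtain ⟨x, hx⟩ := hBne i
      rw [← Pset_blk hB hdisj hx]
      exact Finset.mem_image.mpr ⟨x, Finset.mem_univ x, rfl⟩
  rw [sizes_eq, himg, Finset.image_val_of_injOn (Function.Injective.injOn hBinj),
    Multiset.map_map]
  refine Multiset.map_congr rfl fun i _ => ?_
  exact hcard i

lemma Pset_blk_last {τ : Setoid (Fin (d + 2))} (hτ : τ ∈ Pset π l α) :
    ∃ hl : 0 < l, (blk τ Lv).card = α ⟨0, hl⟩ := by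
  obtain ⟨-, B, hB, hdisj, hcard, hl, hmem⟩ := hτ
  exact ⟨hl, by rw [show (Lv : Fin (d+2)) = Fin.last (d+1) from rfl,
    Pset_blk hB hdisj hmem, hcard]⟩

lemma addSingleton_Lv_iff {y : Fin (d + 2)} : addSingleton π Lv y ↔ y = Lv := by
  constructor
  · intro h
    rcases (addSingleton_iff π).mp h with h | ⟨hx, -, -⟩
    · exact h.symm
    · exact absurd hx (by simp [Lv, Fin.last])
  · rintro rfl
    exact (addSingleton π).refl _

lemma addSingleton_ne_addLast : addSingleton π ≠ addLast π := by
  intro h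
  have := addLast_rel_LD π
  rw [← h] at this
  exact Dv_ne_Lv (addSingleton_Lv_iff.mp this)

/-- If `π/(d+1) ∈ P(α)` then `P(α) = {π/(d+1)}`. -/
lemma Pset_addSingleton {τ : Setoid (Fin (d + 2))} (hpos : ∀ i, 0 < α i)
    (h0 : addSingleton π ∈ Pset π l α) (hτ : τ ∈ Pset π l α) : τ = addSingleton π := by
  -- the block of `Lv` in `addSingleton π` is a singleton
  obtain ⟨hl, hc0⟩ := Pset_blk_last h0
  have hblkL : blk (addSingleton π) Lv = {Lv} := by
    ext y
    rw [mem_blk, addSingleton_Lv_iff, Finset.mem_singleton]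
  have hα0 : α ⟨0, hl⟩ = 1 := by
    rw [← hc0, hblkL, Finset.card_singleton]
  obtain ⟨hlτ, hcτ⟩ := Pset_blk_last hτ
  have hτL : ∀ y, τ Lv y → y = Lv := by
    intro y hy
    have h1 : (blk τ Lv).card = 1 := by rw [hcτ]; exact hα0
    obtain ⟨z, hz⟩ := Finset.card_eq_one.mp h1
    have hyz : y ∈ blk τ Lv := mem_blk.mpr hy
    have hLz : Lv ∈ blk τ Lv := mem_blk.mpr (τ.refl Lv)
    rw [hz, Finset.mem_singleton] at hyz hLz
    rw [hyz, ← hLz]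
  have hleρ : τ ≤ addLast π := hτ.1
  have hle : τ ≤ addSingleton π := by
    refine setoid_le_iff.mpr fun x y hxy => ?_
    rcases (extendB_r (m := 1)).mp (Setoid.le_def.mp hleρ hxy) with heq | hmid | ⟨h1, h2⟩
    · rw [heq]
    · exact (addSingleton_iff π).mpr (Or.inr hmid)
    · have hLx : x = Lv ∨ ∃ hx : (x : ℕ) < d + 1, π ⟨x, hx⟩ (Fin.last d) := by
        rcases h1 with h | ⟨hge, -⟩
        · exact Or.inr h
        · left; apply Fin.ext; have := x.isLt; simp only [Lv, Fin.last]; omega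
      have hLy : y = Lv ∨ ∃ hy : (y : ℕ) < d + 1, π ⟨y, hy⟩ (Fin.last d) := by
        rcases h2 with h | ⟨hge, -⟩
        · exact Or.inr h
        · left; apply Fin.ext; have := y.isLt; simp only [Lv, Fin.last]; omega
      rcases hLx with rfl | ⟨hx, hπx⟩
      · rw [hτL y hxy]
      · rcases hLy with rfl | ⟨hy, hπy⟩
        · have : x = Lv := hτL x (τ.symm hxy)
          rw [this]
        · exact (addSingleton_iff π).mpr (Or.inr ⟨hx, hy, π.trans hπx (π.symm hπy)⟩)
  refine setoid_eq_of_le_of_sizes hle ?_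
  rw [Pset_sizes hτ hpos, Pset_sizes h0 hpos]

/-- If `π+(d+1) ∈ P(α)` then `P(α) = {π+(d+1)}`. -/
lemma Pset_addLast {τ : Setoid (Fin (d + 2))} (hpos : ∀ i, 0 < α i)
    (h0 : addLast π ∈ Pset π l α) (hτ : τ ∈ Pset π l α) : τ = addLast π := by
  refine setoid_eq_of_le_of_sizes hτ.1 ?_
  rw [Pset_sizes hτ hpos, Pset_sizes h0 hpos]

end PsetFacts
end UpProof
namespace UpProof
open Finset

lemma Pset_permApply {d : ℕ} (π : Setoid (Fin (d + 1))) {l : ℕ} {α : Fin l → ℕ}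
    {j : Fin (d + 2)} (hj : j ∈ Jset π) {τ : Setoid (Fin (d + 2))} (hτ : τ ∈ Pset π l α) :
    permApply (Equiv.swap j Dv) τ ∈ Pset π l α := by
  obtain ⟨hle, B, hB, hdisj, hcard, hl, hmem⟩ := hτ
  have hinv : ∀ x, Equiv.swap j Dv (Equiv.swap j Dv x) = x :=
    fun x => Equiv.swap_apply_self _ _ _
  have hmemswap : ∀ (C : Finset (Fin (d + 2))) (x : Fin (d + 2)),
      x ∈ C.image (Equiv.swap j Dv) ↔ Equiv.swap j Dv x ∈ C := by
    intro C x
    constructor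
    · intro h
      obtain ⟨z, hz, rfl⟩ := Finset.mem_image.mp h
      rw [hinv]; exact hz
    · intro h
      exact Finset.mem_image.mpr ⟨_, h, hinv x⟩
  refine ⟨?_, fun i => (B i).image (Equiv.swap j Dv), ?_, ?_, ?_, hl, ?_⟩
  · refine setoid_le_iff.mpr fun x y hxy => ?_
    have h1 : permApply (Equiv.swap j Dv) (addLast π) x y := Setoid.le_def.mp hle hxy
    rw [permApply_swap_addLast π hj] at h1
    exact h1
  · intro x y
    rw [show (permApply (Equiv.swap j Dv) τ) x y
        ↔ τ (Equiv.swap j Dv x) (Equiv.swap j Dv y) from Iff.rfl, hB]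
    constructor
    · rintro ⟨i, h1, h2⟩
      exact ⟨i, (hmemswap _ _).mpr h1, (hmemswap _ _).mpr h2⟩
    · rintro ⟨i, h1, h2⟩
      exact ⟨i, (hmemswap _ _).mp h1, (hmemswap _ _).mp h2⟩
  · intro i i' hne
    refine Finset.disjoint_left.mpr fun a ha ha' => ?_
    exact Finset.disjoint_left.mp (hdisj i i' hne) ((hmemswap _ _).mp ha) ((hmemswap _ _).mp ha')
  · intro i
    rw [Finset.card_image_of_injective _ (Equiv.injective _)]
    exact hcard i
  · rw [hmemswap]
    have hsL : Equiv.swap j Dv (Fin.last (d + 1)) = Fin.last (d + 1) :=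
      Equiv.swap_apply_of_ne_of_ne (Ne.symm (J_ne_Lv π hj)) (Ne.symm Dv_ne_Lv)
    rw [hsL]
    exact hmem

lemma blockCard_pos {d : ℕ} (π : Setoid (Fin (d + 1))) (i : Fin (d + 1)) :
    0 < blockCard π i := by
  rw [blockCard]
  refine Finset.card_pos.mpr ⟨i, ?_⟩
  simp only [Finset.mem_filter, Finset.mem_univ, true_and]
  exact π.refl i

end UpProof

open UpProof in
theorem up_eFun_grouped_coefficients' {d : ℕ} (π : Setoid (Fin (d + 1)))
    (c : Setoid (Fin (d + 2)) → ℚ)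
    (hc : up (eFun π) = ∑ τ : Setoid (Fin (d + 2)), c τ • eFun τ) :
    (∀ τ, ¬ τ ≤ addLast π → c τ = 0) ∧
    ∀ (l : ℕ) (α : Fin l → ℕ), (∀ i, 0 < α i) →
      (∑ τ : Setoid (Fin (d + 2)), if τ ∈ Pset π l α then c τ else 0) =
        if Pset π l α = {addSingleton π} then 1 / (blockCard π (Fin.last d) : ℚ)
        else if Pset π l α = {addLast π} then -(1 / (blockCard π (Fin.last d) : ℚ))
        else 0 := by
  obtain ⟨aD, haD0, haD⟩ := gg_expansion π Dv (Dv_mem_J π)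
  have hfD : up (eFun π) = ∑ τ : Setoid (Fin (d + 2)), aD τ • eFun τ := by
    rw [up_eq_ggD π]; exact haD
  have hcaD : c = aD := eFun_coeffs_unique c aD (hc.symm.trans hfD)
  constructor
  · intro τ hτ
    rw [hcaD]
    exact haD0 τ hτ
  · intro l α hpos
    -- abbreviations
    have hbpos := blockCard_pos π (Fin.last d)
    have hbne : (blockCard π (Fin.last d) : ℚ) ≠ 0 := Nat.cast_ne_zero.mpr hbpos.ne'
    -- grouped sums are swap invariant
    have hgroup : ∀ j ∈ Jset π,
        (∑ τ : Setoid (Fin (d + 2)),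
          if τ ∈ Pset π l α then aD (permApply (Equiv.swap j Dv) τ) else 0)
        = ∑ τ : Setoid (Fin (d + 2)), if τ ∈ Pset π l α then aD τ else 0 := by
      intro j hj
      have hinv : ∀ x, Equiv.swap j Dv (Equiv.swap j Dv x) = x :=
        fun x => Equiv.swap_apply_self _ _ _
      have hmemiff : ∀ τ : Setoid (Fin (d + 2)),
          τ ∈ Pset π l α ↔ permApply (Equiv.swap j Dv) τ ∈ Pset π l α := by
        intro τ
        constructor
        · exact fun h => Pset_permApply π hj h
        · intro h
          have := Pset_permApply π hj h
          rwa [permApply_invol hinv] at this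
      calc (∑ τ : Setoid (Fin (d + 2)),
            if τ ∈ Pset π l α then aD (permApply (Equiv.swap j Dv) τ) else 0)
          = ∑ τ : Setoid (Fin (d + 2)),
            (if permApply (Equiv.swap j Dv) τ ∈ Pset π l α
              then aD (permApply (Equiv.swap j Dv) τ) else 0) := by
            refine Finset.sum_congr rfl fun τ _ => ?_
            exact if_congr (hmemiff τ) rfl rfl
        _ = ∑ τ : Setoid (Fin (d + 2)), if τ ∈ Pset π l α then aD τ else 0 :=
            Function.Bijective.sum_comp (permApply_bijective hinv)
              (fun τ => if τ ∈ Pset π l α then aD τ else 0)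
    -- sum of coefficient families over J
    have hFG : (fun τ : Setoid (Fin (d + 2)) =>
          ∑ j ∈ Jset π, aD (permApply (Equiv.swap j Dv) τ))
        = fun τ : Setoid (Fin (d + 2)) =>
          (if τ = addSingleton π then (1 : ℚ) else 0)
            - (if τ = addLast π then (1 : ℚ) else 0) := by
      apply eFun_coeffs_unique
      funext w
      rw [Finset.sum_apply, Finset.sum_apply]
      have hleft : (∑ τ : Setoid (Fin (d + 2)),
            ((∑ j ∈ Jset π, aD (permApply (Equiv.swap j Dv) τ)) • eFun τ) w)
          = ∑ j ∈ Jset π, gg π j w := by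
        calc (∑ τ : Setoid (Fin (d + 2)),
              ((∑ j ∈ Jset π, aD (permApply (Equiv.swap j Dv) τ)) • eFun τ) w)
            = ∑ τ : Setoid (Fin (d + 2)), ∑ j ∈ Jset π,
                aD (permApply (Equiv.swap j Dv) τ) * eFun τ w := by
              refine Finset.sum_congr rfl fun τ _ => ?_
              rw [Pi.smul_apply, smul_eq_mul, Finset.sum_mul]
          _ = ∑ j ∈ Jset π, ∑ τ : Setoid (Fin (d + 2)),
                aD (permApply (Equiv.swap j Dv) τ) * eFun τ w := Finset.sum_comm
          _ = ∑ j ∈ Jset π, gg π j w := by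
              refine Finset.sum_congr rfl fun j hj => ?_
              have := congrFun (coeff_swap π j hj aD haD) w
              rw [this, Finset.sum_apply]
              refine Finset.sum_congr rfl fun τ _ => ?_
              rw [Pi.smul_apply, smul_eq_mul]
      have hright : (∑ τ : Setoid (Fin (d + 2)),
            (((if τ = addSingleton π then (1 : ℚ) else 0)
              - (if τ = addLast π then (1 : ℚ) else 0)) • eFun τ) w)
          = eFun (addSingleton π) w - eFun (addLast π) w := by
        have hsplit : ∀ τ : Setoid (Fin (d + 2)),
            (((if τ = addSingleton π then (1 : ℚ) else 0)
              - (if τ = addLast π then (1 : ℚ) else 0)) • eFun τ) w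
            = (if τ = addSingleton π then eFun τ w else 0)
              - (if τ = addLast π then eFun τ w else 0) := by
          intro τ
          rw [Pi.smul_apply, smul_eq_mul, sub_mul]
          congr 1
          · by_cases h : τ = addSingleton π <;> simp [h]
          · by_cases h : τ = addLast π <;> simp [h]
        rw [Finset.sum_congr rfl fun τ _ => hsplit τ, Finset.sum_sub_distrib]
        congr 1
        · rw [Finset.sum_ite_eq' Finset.univ (addSingleton π) (fun τ => eFun τ w),
            if_pos (Finset.mem_univ _)]
        · rw [Finset.sum_ite_eq' Finset.univ (addLast π) (fun τ => eFun τ w),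
            if_pos (Finset.mem_univ _)]
      rw [hleft, hright, sum_gg π w]
    -- the main computation
    have hbS : (blockCard π (Fin.last d) : ℚ)
          * (∑ τ : Setoid (Fin (d + 2)), if τ ∈ Pset π l α then c τ else 0)
        = (if addSingleton π ∈ Pset π l α then (1 : ℚ) else 0)
          - (if addLast π ∈ Pset π l α then (1 : ℚ) else 0) := by
      calc (blockCard π (Fin.last d) : ℚ)
            * (∑ τ : Setoid (Fin (d + 2)), if τ ∈ Pset π l α then c τ else 0)
          = ((Jset π).card : ℚ)
            * (∑ τ : Setoid (Fin (d + 2)), if τ ∈ Pset π l α then aD τ else 0) := by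
            rw [J_card, hcaD]
        _ = ∑ j ∈ Jset π,
              (∑ τ : Setoid (Fin (d + 2)), if τ ∈ Pset π l α then aD τ else 0) := by
            rw [Finset.sum_const, nsmul_eq_mul]
        _ = ∑ j ∈ Jset π, (∑ τ : Setoid (Fin (d + 2)),
              if τ ∈ Pset π l α then aD (permApply (Equiv.swap j Dv) τ) else 0) := by
            refine Finset.sum_congr rfl fun j hj => ?_
            exact (hgroup j hj).symm
        _ = ∑ τ : Setoid (Fin (d + 2)), ∑ j ∈ Jset π,
              (if τ ∈ Pset π l α then aD (permApply (Equiv.swap j Dv) τ) else 0) :=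
            Finset.sum_comm
        _ = ∑ τ : Setoid (Fin (d + 2)), (if τ ∈ Pset π l α then
              ((if τ = addSingleton π then (1 : ℚ) else 0)
                - (if τ = addLast π then (1 : ℚ) else 0)) else 0) := by
            refine Finset.sum_congr rfl fun τ _ => ?_
            by_cases h : τ ∈ Pset π l α
            · rw [if_pos h, ← congrFun hFG τ]
              refine Finset.sum_congr rfl fun j hj => ?_
              rw [if_pos h]
            · rw [if_neg h, Finset.sum_eq_zero fun j _ => if_neg h]
        _ = (if addSingleton π ∈ Pset π l α then (1 : ℚ) else 0)
              - (if addLast π ∈ Pset π l α then (1 : ℚ) else 0) := by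
            have hsplit : ∀ τ : Setoid (Fin (d + 2)), (if τ ∈ Pset π l α then
                ((if τ = addSingleton π then (1 : ℚ) else 0)
                  - (if τ = addLast π then (1 : ℚ) else 0)) else 0)
              = (if τ = addSingleton π then (if τ ∈ Pset π l α then (1 : ℚ) else 0) else 0)
                - (if τ = addLast π then (if τ ∈ Pset π l α then (1 : ℚ) else 0) else 0) := by
              intro τ
              have hne : addSingleton π ≠ addLast π := addSingleton_ne_addLast
              by_cases h2 : τ = addSingleton π
              · subst h2
                by_cases h1 : addSingleton π ∈ Pset π l α <;> simp [h1, hne]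
              · by_cases h3 : τ = addLast π
                · subst h3
                  by_cases h1 : addLast π ∈ Pset π l α <;> simp [h1, Ne.symm hne]
                · simp [h2, h3]
            rw [Finset.sum_congr rfl fun τ _ => hsplit τ, Finset.sum_sub_distrib]
            congr 1
            · rw [Finset.sum_ite_eq' Finset.univ (addSingleton π)
                (fun τ => if τ ∈ Pset π l α then (1 : ℚ) else 0), if_pos (Finset.mem_univ _)]
            · rw [Finset.sum_ite_eq' Finset.univ (addLast π)
                (fun τ => if τ ∈ Pset π l α then (1 : ℚ) else 0), if_pos (Finset.mem_univ _)]
    by_cases h1 : addSingleton π ∈ Pset π l α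
    · have hPeq : Pset π l α = {addSingleton π} := by
        ext τ
        rw [Set.mem_singleton_iff]
        exact ⟨fun h => Pset_addSingleton hpos h1 h, fun h => h ▸ h1⟩
      have h2 : addLast π ∉ Pset π l α := fun h =>
        addSingleton_ne_addLast (Pset_addLast hpos h h1)
      rw [if_pos hPeq]
      rw [if_pos h1, if_neg h2] at hbS
      rw [eq_div_iff hbne, mul_comm]
      linarith
    · by_cases h2 : addLast π ∈ Pset π l α
      · have hPeq : Pset π l α = {addLast π} := by
          ext τ
          rw [Set.mem_singleton_iff]
          exact ⟨fun h => Pset_addLast hpos h2 h, fun h => h ▸ h2⟩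
        have hPne : Pset π l α ≠ {addSingleton π} := by
          intro hEq
          rw [hEq, Set.mem_singleton_iff] at h2
          exact addSingleton_ne_addLast h2.symm
        rw [if_neg hPne, if_pos hPeq]
        rw [if_neg h1, if_pos h2] at hbS
        rw [neg_div' ]
        rw [eq_div_iff hbne, mul_comm]
        linarith
      · have hPne1 : Pset π l α ≠ {addSingleton π} := fun hEq => h1 (by rw [hEq]; rfl)
        have hPne2 : Pset π l α ≠ {addLast π} := fun hEq => h2 (by rw [hEq]; rfl)
        rw [if_neg hPne1, if_neg hPne2]
        rw [if_neg h1, if_neg h2] at hbS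
        have := mul_eq_zero.mp (by linarith : (blockCard π (Fin.last d) : ℚ)
          * (∑ τ : Setoid (Fin (d + 2)), if τ ∈ Pset π l α then c τ else 0) = 0)
        rcases this with h | h
        · exact absurd h hbne
        · exact h

/-- Lemma on the grouped coefficients of `e_π↑`: writing
`e_π↑ = Σ_τ c_τ e_τ`, one has `c_τ = 0` unless `τ ≤ π+(d+1)`, and for every
composition `α` the sum of `c_τ` over `τ ∈ P(α)` is `1/|B_π|`, `-1/|B_π|` or
`0` according as `P(α)` is `{π/d+1}`, `{π+(d+1)}`, or anything else. -/
theorem up_eFun_grouped_coefficients {d : ℕ} (π : Setoid (Fin (d + 1)))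
    (c : Setoid (Fin (d + 2)) → ℚ)
    (hc : up (eFun π) = ∑ τ : Setoid (Fin (d + 2)), c τ • eFun τ) :
    (∀ τ, ¬ τ ≤ addLast π → c τ = 0) ∧
    ∀ (l : ℕ) (α : Fin l → ℕ), (∀ i, 0 < α i) →
      (∑ τ : Setoid (Fin (d + 2)), if τ ∈ Pset π l α then c τ else 0) =
        if Pset π l α = {addSingleton π} then 1 / (blockCard π (Fin.last d) : ℚ)
        else if Pset π l α = {addLast π} then -(1 / (blockCard π (Fin.last d) : ℚ))
        else 0 := by
  exact up_eFun_grouped_coefficients' π c hc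
end
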